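/- arXiv:0706.0223 — 6 statements merged into one kernel-verified Lean document; each statement's English description precedes it below -/
import Mathlib

section
/- There exists a universal constant c > 0 such that for every real ε with 0 < ε < 1/4 and every sequence (n_j)_{j≥1} of positive integers satisfying n_{j+1} ≥ (1+ε)·n_j for all j ≥ 1, the chromatic number of the distance graph G(S) with S = {n_j : j ≥ 1} is at most 1 + c⁻¹·ε⁻¹·|log ε|. -/
/-!
Colour `x ∈ ℤ` by `⌊m · fract (x α)⌋` with `m = ⌈δ⁻¹⌉`: this is a proper colouring of the
distance graph as soon as `s α` stays at distance at least `δ` from `ℤ` for every `s ∈ S`.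

Such an `α` is found by a Cantor-type construction on the `Q`-adic grid. At level `i + 1` one
keeps the children of the surviving cells of level `i` that avoid `{x | s x is δ-close to ℤ}`
for all `s ∈ S` with `s < Q ^ i`. Only the `s ∈ [Q ^ (i - 1), Q ^ i)` are new at that level; by
lacunarity there are at most `b ≈ log Q / ε` of them, and each one meets at most
`6 δ Q² + 2 Q + 4` of the `Q²` grandchildren of a surviving cell of level `i - 1`. Hence, if
`b (6 δ Q² + 2 Q + 4) ≤ Q² / 4`, at least half of the children survive at each level, and the
nested compact unions of surviving cells have a common point `α`. The choice `Q ≈ ε⁻⁸`,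
`δ = ε / (1200 log ε⁻¹)` meets this budget and uses `⌈δ⁻¹⌉ ≤ 1 + 1200 ε⁻¹ |log ε|` colours.
-/

def distGraph (S : Set ℕ) : SimpleGraph ℤ where
  Adj x y := x ≠ y ∧ (x - y).natAbs ∈ S
  symm := by
    constructor
    intro x y h
    refine ⟨h.1.symm, ?_⟩
    have : (y - x).natAbs = (x - y).natAbs := by
      rw [← Int.natAbs_neg, neg_sub]
    rw [this]
    exact h.2
  loopless := by
    constructor
    intro x h
    exact h.1 rfl

open Finset

lemma distGraph_colorable_of_le_abs_mul_sub {S : Set ℕ} {α δ : ℝ} (hδ : 0 < δ)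
    (hα : ∀ s ∈ S, ∀ p : ℤ, δ ≤ |s * α - p|) : (distGraph S).Colorable ⌈δ⁻¹⌉₊ := by
  set m := ⌈δ⁻¹⌉₊
  have hm : (0 : ℝ) < m := Nat.cast_pos.2 (Nat.ceil_pos.2 (inv_pos.2 hδ))
  have hδm : 1 ≤ δ * m := (inv_le_iff_one_le_mul₀' hδ).1 (Nat.le_ceil _)
  have hαℤ : ∀ z : ℤ, z.natAbs ∈ S → ∀ p : ℤ, δ ≤ |z * α - p| := by
    intro z hz p
    obtain ⟨s, rfl | rfl⟩ : ∃ s : ℕ, z = s ∨ z = -s := ⟨_, Int.natAbs_eq z⟩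
    · exact_mod_cast hα s (by simpa using hz) p
    · rw [← abs_neg]
      simpa [sub_eq_add_neg, add_comm] using hα s (by simpa using hz) (-p)
  let color (x : ℤ) : ℝ := Int.fract (x * α) * m
  have hcolor (x : ℤ) : ⌊color x⌋₊ < m := (Nat.floor_lt (by positivity)).2 <| by
    simpa using mul_lt_mul_of_pos_right (Int.fract_lt_one (x * α)) hm
  refine ⟨.mk (fun x => ⟨⌊color x⌋₊, hcolor x⟩) fun {x y} hxy hc => ?_⟩
  have hc : ⌊color x⌋₊ = ⌊color y⌋₊ := congrArg Fin.val hc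
  have hclose : |color x - color y| < 1 := by
    have := Nat.floor_le (a := color x) (by positivity)
    have := Nat.floor_le (a := color y) (by positivity)
    have := Nat.lt_floor_add_one (color x)
    have := Nat.lt_floor_add_one (color y)
    rw [abs_sub_lt_iff]; push_cast [hc] at *; constructor <;> linarith
  have hdiff : color x - color y = ((x - y : ℤ) * α - (⌊x * α⌋ - ⌊y * α⌋ : ℤ)) * m := by
    simp only [color, Int.fract]; push_cast; ring
  have hfar := hαℤ (x - y) hxy.2 (⌊x * α⌋ - ⌊y * α⌋)
  rw [hdiff, abs_mul, abs_of_pos hm] at hclose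
  nlinarith [mul_le_mul_of_nonneg_right hfar hm.le]

def nearInt (s δ : ℝ) : Set ℝ := {x | ∃ p : ℤ, |s * x - p| < δ}

def gridCell (h : ℝ) (k : ℤ) : Set ℝ := Set.Icc (k / h) ((k + 1) / h)

noncomputable def gridChildren (Q : ℕ) (F : Finset ℤ) : Finset ℤ :=
  F.biUnion fun g => Ico (g * Q) (g * Q + Q)

lemma card_Icc_ceil_floor_le {u v : ℝ} (h : u ≤ v + 1) :
    (#(Icc ⌈u⌉ ⌊v⌋) : ℝ) ≤ v - u + 1 := by
  have hv := Int.floor_le v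
  have hu := Int.le_ceil u
  rw [Int.card_Icc]
  rcases le_or_gt 0 (⌊v⌋ + 1 - ⌈u⌉) with h0 | h0
  · rw [← Int.cast_natCast, Int.toNat_of_nonneg h0]
    push_cast
    linarith
  · rw [Int.toNat_of_nonpos h0.le, Nat.cast_zero]
    linarith

open Classical in
lemma card_filter_not_disjoint_gridCell_le {s h δ : ℝ} (hs : 0 < s) (hh : 0 < h) (hδ : 0 ≤ δ)
    (hδ' : δ ≤ 1 / 2) (a : ℤ) (M : ℕ) :
    (#{k ∈ Ico a (a + M) | ¬Disjoint (gridCell h k) (nearInt s δ)} : ℝ) ≤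
      2 * δ * M + 2 * M * s / h + 4 * δ * h / s + 4 := by
  set t := s / h with ht
  have ht0 : 0 < t := div_pos hs hh
  -- in the coordinate `y = h * x` the cells are unit intervals and `s * x = t * y`
  have hsub : {k ∈ Ico a (a + M) | ¬Disjoint (gridCell h k) (nearInt s δ)} ⊆
      (Icc ⌈t * a - δ⌉ ⌊t * (a + M) + δ⌋).biUnion
        fun p : ℤ => Icc ⌈(p - δ) / t - 1⌉ ⌊(p + δ) / t⌋ := by
    intro k hk
    obtain ⟨hk, hnd⟩ := mem_filter.1 hk
    obtain ⟨x, ⟨hx₁, hx₂⟩, p, hp⟩ := Set.not_disjoint_iff.1 hnd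
    obtain ⟨hka, hkM⟩ := mem_Ico.1 hk
    have hka' : (a : ℝ) ≤ k := by exact_mod_cast hka
    have hkM' : (k : ℝ) + 1 ≤ a + M := by exact_mod_cast hkM
    rw [div_le_iff₀ hh] at hx₁
    rw [le_div_iff₀ hh] at hx₂
    have hsx : s * x = t * (x * h) := by rw [ht]; field_simp
    rw [hsx, abs_lt] at hp
    refine mem_biUnion.2 ⟨p, mem_Icc.2 ⟨Int.ceil_le.2 ?_, Int.le_floor.2 ?_⟩,
      mem_Icc.2 ⟨Int.ceil_le.2 ?_, Int.le_floor.2 ?_⟩⟩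
    · nlinarith
    · nlinarith
    · rw [sub_le_iff_le_add, div_le_iff₀ ht0]; nlinarith
    · rw [le_div_iff₀ ht0]; nlinarith
  calc (#{k ∈ Ico a (a + M) | ¬Disjoint (gridCell h k) (nearInt s δ)} : ℝ)
      ≤ ∑ p ∈ Icc ⌈t * a - δ⌉ ⌊t * (a + M) + δ⌋,
          (#(Icc ⌈(p - δ) / t - 1⌉ ⌊(p + δ) / t⌋) : ℝ) := by
        exact_mod_cast (card_le_card hsub).trans card_biUnion_le
    _ ≤ ∑ _p ∈ Icc ⌈t * a - δ⌉ ⌊t * (a + M) + δ⌋, (2 * δ / t + 2) := by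
        refine sum_le_sum fun p _ => (card_Icc_ceil_floor_le ?_).trans_eq ?_
        · have : 0 ≤ δ / t := by positivity
          rw [sub_div, add_div]; linarith
        · field_simp; ring
    _ ≤ (M * t + 2) * (2 * δ / t + 2) := by
        rw [sum_const, nsmul_eq_mul]
        gcongr
        refine (card_Icc_ceil_floor_le ?_).trans ?_ <;> nlinarith
    _ = 2 * δ * M + 2 * M * s / h + 4 * δ * h / s + 4 := by
        rw [ht]; field_simp; ring

section gridChildren

variable {Q : ℕ}

lemma mem_gridChildren (hQ : 0 < Q) {F : Finset ℤ} {k : ℤ} :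
    k ∈ gridChildren Q F ↔ k / Q ∈ F := by
  simp only [gridChildren, mem_biUnion, mem_Ico]
  constructor
  · rintro ⟨g, hg, hk⟩
    rwa [(Int.ediv_eq_iff_of_pos (by exact_mod_cast hQ)).2 hk]
  · exact fun hk => ⟨k / Q, hk, (Int.ediv_eq_iff_of_pos (by exact_mod_cast hQ)).1 rfl⟩

lemma gridChildren_mono {F G : Finset ℤ} (h : F ⊆ G) : gridChildren Q F ⊆ gridChildren Q G :=
  biUnion_subset_biUnion_of_subset_left _ h

lemma gridChildren_gridChildren (hQ : 0 < Q) (F : Finset ℤ) :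
    gridChildren Q (gridChildren Q F) = gridChildren (Q * Q) F := by
  ext k
  rw [mem_gridChildren hQ, mem_gridChildren hQ, mem_gridChildren (Nat.mul_pos hQ hQ),
    Int.ediv_ediv_of_nonneg (by positivity), Nat.cast_mul]

lemma card_gridChildren (hQ : 0 < Q) (F : Finset ℤ) : #(gridChildren Q F) = Q * #F := by
  rw [gridChildren, card_biUnion, sum_const_nat (m := Q) fun g _ => by simp [Int.card_Ico],
    mul_comm]
  intro g _ g' _ hne
  refine disjoint_left.2 fun k hk hk' => hne ?_
  have hQ' : (0 : ℤ) < Q := by exact_mod_cast hQ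
  rw [← (Int.ediv_eq_iff_of_pos hQ').2 (mem_Ico.1 hk),
    ← (Int.ediv_eq_iff_of_pos hQ').2 (mem_Ico.1 hk')]

lemma gridCell_subset_gridCell_ediv (hQ : 0 < Q) (i : ℕ) (k : ℤ) :
    gridCell ((Q : ℝ) ^ (i + 1)) k ⊆ gridCell ((Q : ℝ) ^ i) (k / Q) := by
  have hQ' : (0 : ℤ) < Q := by exact_mod_cast hQ
  have h₁ : ((k / Q : ℤ) : ℝ) * Q ≤ k := by exact_mod_cast Int.ediv_mul_le k hQ'.ne'
  have h₂ : (k : ℝ) + 1 ≤ ((k / Q : ℤ) + 1) * Q := by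
    exact_mod_cast Int.add_one_le_of_lt (Int.lt_ediv_add_one_mul_self k hQ')
  have hQi : (0 : ℝ) < (Q : ℝ) ^ i := by positivity
  refine Set.Icc_subset_Icc ?_ ?_
  · rw [div_le_div_iff₀ hQi (by positivity), pow_succ]
    nlinarith
  · rw [div_le_div_iff₀ (by positivity) hQi, pow_succ]
    nlinarith

end gridChildren

open Classical in
lemma card_filter_not_disjoint_gridChildren_le {s h δ : ℝ} (hs : 0 < s) (hh : 0 < h)
    (hδ : 0 ≤ δ) (hδ' : δ ≤ 1 / 2) (M : ℕ) (F : Finset ℤ) :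
    (#{k ∈ gridChildren M F | ¬Disjoint (gridCell h k) (nearInt s δ)} : ℝ) ≤
      #F * (2 * δ * M + 2 * M * s / h + 4 * δ * h / s + 4) := by
  rw [gridChildren, filter_biUnion]
  calc _ ≤ ∑ g ∈ F,
          (#{k ∈ Ico (g * M) (g * M + M) | ¬Disjoint (gridCell h k) (nearInt s δ)} : ℝ) := by
        exact_mod_cast card_biUnion_le
    _ ≤ ∑ _g ∈ F, (2 * δ * M + 2 * M * s / h + 4 * δ * h / s + 4) :=
        sum_le_sum fun g _ => card_filter_not_disjoint_gridCell_le hs hh hδ hδ' _ _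
    _ = _ := by rw [sum_const, nsmul_eq_mul]

open Classical in
noncomputable def survivingCells (S : Set ℕ) (Q : ℕ) (δ : ℝ) : ℕ → Finset ℤ
  | 0 => {0}
  | i + 1 => {k ∈ gridChildren Q (survivingCells S Q δ i) |
      ∀ s ∈ S, s < Q ^ i → Disjoint (gridCell ((Q : ℝ) ^ (i + 1)) k) (nearInt s δ)}

section survivingCells

variable {S : Set ℕ} {Q : ℕ} {δ : ℝ}

lemma survivingCells_succ_subset (i : ℕ) :
    survivingCells S Q δ (i + 1) ⊆ gridChildren Q (survivingCells S Q δ i) := by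
  classical
  exact filter_subset _ _

lemma disjoint_of_mem_survivingCells {i : ℕ} {k : ℤ} (hk : k ∈ survivingCells S Q δ (i + 1))
    {s : ℕ} (hs : s ∈ S) (hsi : s < Q ^ i) :
    Disjoint (gridCell ((Q : ℝ) ^ (i + 1)) k) (nearInt s δ) := by
  classical
  rw [survivingCells] at hk
  exact (mem_filter.1 hk).2 s hs hsi

lemma card_survivingCells_one (hS : 0 ∉ S) (hQ : 0 < Q) : #(survivingCells S Q δ 1) = Q := by
  classical
  rw [survivingCells, filter_true_of_mem, card_gridChildren hQ, survivingCells, card_singleton,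
    mul_one]
  intro k _ s hs hs1
  rw [pow_zero, Nat.lt_one_iff] at hs1
  exact absurd (hs1 ▸ hs) hS

lemma mem_survivingCells_add_two {i : ℕ} {k : ℤ} (hQ : 0 < Q)
    (hk : k ∈ gridChildren Q (survivingCells S Q δ (i + 1)))
    (hwin : ∀ s ∈ S, Q ^ i ≤ s → s < Q ^ (i + 1) →
      Disjoint (gridCell ((Q : ℝ) ^ (i + 2)) k) (nearInt s δ)) :
    k ∈ survivingCells S Q δ (i + 2) := by
  classical
  rw [survivingCells]
  refine mem_filter.2 ⟨hk, fun s hs hsi => ?_⟩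
  by_cases hsi' : s < Q ^ i
  · exact (disjoint_of_mem_survivingCells ((mem_gridChildren hQ).1 hk) hs hsi').mono_left
      (gridCell_subset_gridCell_ediv hQ (i + 1) k)
  · exact hwin s hs (not_lt.1 hsi') hsi

open Classical in
lemma card_filter_not_disjoint_survivingCells_le (hQ : 2 ≤ Q) (hδ : 0 ≤ δ) (hδ' : δ ≤ 1 / 2)
    {i s : ℕ} (hs₁ : Q ^ i ≤ s) (hs₂ : s < Q ^ (i + 1)) :
    (#{k ∈ gridChildren Q (survivingCells S Q δ (i + 1)) |
        ¬Disjoint (gridCell ((Q : ℝ) ^ (i + 2)) k) (nearInt s δ)} : ℝ) ≤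
      #(survivingCells S Q δ i) * (6 * δ * Q ^ 2 + 2 * Q + 4) := by
  have hQ0 : 0 < Q := by omega
  set h : ℝ := (Q : ℝ) ^ (i + 2)
  have hsQ₁ : (Q : ℝ) ^ i ≤ s := by exact_mod_cast hs₁
  have hsQ₂ : (s : ℝ) < Q ^ (i + 1) := by exact_mod_cast hs₂
  have hs0 : (0 : ℝ) < s := lt_of_lt_of_le (by positivity) hsQ₁
  have hh : 0 < h := by positivity
  have hsub : gridChildren Q (survivingCells S Q δ (i + 1)) ⊆
      gridChildren (Q * Q) (survivingCells S Q δ i) := by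
    rw [← gridChildren_gridChildren hQ0]
    exact gridChildren_mono (survivingCells_succ_subset i)
  have h₁ : 2 * ((Q : ℝ) * Q) * s / h ≤ 2 * Q := by
    rw [div_le_iff₀ hh]
    simp only [h, pow_succ] at hsQ₂ ⊢
    nlinarith
  have h₂ : 4 * δ * h / s ≤ 4 * δ * (Q * Q) := by
    rw [div_le_iff₀ hs0, mul_assoc (4 * δ)]
    gcongr
    simp only [h, pow_add]
    nlinarith
  calc _ ≤ (#{k ∈ gridChildren (Q * Q) (survivingCells S Q δ i) |
            ¬Disjoint (gridCell h k) (nearInt s δ)} : ℝ) := by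
        exact_mod_cast card_le_card (filter_subset_filter _ hsub)
    _ ≤ _ := card_filter_not_disjoint_gridChildren_le hs0 hh hδ hδ' _ _
    _ ≤ _ := by
        refine mul_le_mul_of_nonneg_left ?_ (Nat.cast_nonneg _)
        push_cast
        rw [sq]
        linarith

lemma card_survivingCells_add_two_ge [DecidablePred (· ∈ S)] (hQ : 2 ≤ Q) (hδ : 0 ≤ δ)
    (hδ' : δ ≤ 1 / 2) (i : ℕ) :
    (Q : ℝ) * #(survivingCells S Q δ (i + 1)) -
        #{s ∈ Ico (Q ^ i) (Q ^ (i + 1)) | s ∈ S} * #(survivingCells S Q δ i) *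
          (6 * δ * Q ^ 2 + 2 * Q + 4) ≤ #(survivingCells S Q δ (i + 2)) := by
  classical
  have hQ0 : 0 < Q := by omega
  set W := {s ∈ Ico (Q ^ i) (Q ^ (i + 1)) | s ∈ S}
  set T := gridChildren Q (survivingCells S Q δ (i + 1))
  set bad := W.biUnion fun s =>
    {k ∈ T | ¬Disjoint (gridCell ((Q : ℝ) ^ (i + 2)) k) (nearInt s δ)}
  have hsurv : T \ bad ⊆ survivingCells S Q δ (i + 2) := by
    intro k hk
    obtain ⟨hkT, hkbad⟩ := mem_sdiff.1 hk
    refine mem_survivingCells_add_two hQ0 hkT fun s hs hs₁ hs₂ => ?_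
    by_contra hnd
    exact hkbad (mem_biUnion.2
      ⟨s, mem_filter.2 ⟨mem_Ico.2 ⟨hs₁, hs₂⟩, hs⟩, mem_filter.2 ⟨hkT, hnd⟩⟩)
  have hbad : (#bad : ℝ) ≤ #W * #(survivingCells S Q δ i) * (6 * δ * Q ^ 2 + 2 * Q + 4) := by
    calc (#bad : ℝ) ≤ ∑ s ∈ W,
          (#{k ∈ T | ¬Disjoint (gridCell ((Q : ℝ) ^ (i + 2)) k) (nearInt s δ)} : ℝ) :=
          (Nat.cast_le.2 card_biUnion_le).trans_eq (Nat.cast_sum _ _)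
      _ ≤ ∑ _s ∈ W, #(survivingCells S Q δ i) * (6 * δ * Q ^ 2 + 2 * Q + 4) :=
          sum_le_sum fun s hs =>
            have hs' := mem_Ico.1 (mem_filter.1 hs).1
            card_filter_not_disjoint_survivingCells_le hQ hδ hδ' hs'.1 hs'.2
      _ = _ := by rw [sum_const, nsmul_eq_mul, ← mul_assoc]
  have hT : (#T : ℝ) ≤ #(T \ bad) + #bad := by exact_mod_cast card_le_card_sdiff_add_card
  have hsurv' : (#(T \ bad) : ℝ) ≤ #(survivingCells S Q δ (i + 2)) := by
    exact_mod_cast card_le_card hsurv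
  rw [card_gridChildren hQ0, Nat.cast_mul] at hT
  linarith

end survivingCells

section existence

variable {S : Set ℕ} [DecidablePred (· ∈ S)] {Q B : ℕ} {δ : ℝ}

lemma mul_card_survivingCells_le (hS : 0 ∉ S) (hQ : 2 ≤ Q) (hδ : 0 ≤ δ) (hδ' : δ ≤ 1 / 2)
    (hW : ∀ i, #{s ∈ Ico (Q ^ i) (Q ^ (i + 1)) | s ∈ S} ≤ B)
    (hB : B * (6 * δ * Q ^ 2 + 2 * Q + 4) ≤ (Q : ℝ) ^ 2 / 4) (i : ℕ) :
    (Q : ℝ) * #(survivingCells S Q δ i) ≤ 2 * #(survivingCells S Q δ (i + 1)) := by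
  induction i with
  | zero =>
    rw [card_survivingCells_one hS (by omega), survivingCells, card_singleton]
    push_cast
    linarith
  | succ i ih =>
    have hstep := card_survivingCells_add_two_ge (S := S) hQ hδ hδ' i
    have hC : 0 ≤ 6 * δ * Q ^ 2 + 2 * Q + 4 := by positivity
    have hQ0 : (0 : ℝ) < Q := by norm_cast; omega
    have hremoved : (#{s ∈ Ico (Q ^ i) (Q ^ (i + 1)) | s ∈ S} : ℝ) * #(survivingCells S Q δ i) *
        (6 * δ * Q ^ 2 + 2 * Q + 4) ≤ Q / 2 * #(survivingCells S Q δ (i + 1)) := by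
      have hWi : (#{s ∈ Ico (Q ^ i) (Q ^ (i + 1)) | s ∈ S} : ℝ) ≤ B := by exact_mod_cast hW i
      refine le_of_mul_le_mul_left ?_ hQ0
      calc _ = (#{s ∈ Ico (Q ^ i) (Q ^ (i + 1)) | s ∈ S} : ℝ) * (6 * δ * Q ^ 2 + 2 * Q + 4) *
            (Q * #(survivingCells S Q δ i)) := by ring
        _ ≤ B * (6 * δ * Q ^ 2 + 2 * Q + 4) * (2 * #(survivingCells S Q δ (i + 1))) := by gcongr
        _ ≤ (Q : ℝ) ^ 2 / 4 * (2 * #(survivingCells S Q δ (i + 1))) := by gcongr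
        _ = _ := by ring
    linarith

lemma survivingCells_nonempty (hS : 0 ∉ S) (hQ : 2 ≤ Q) (hδ : 0 ≤ δ) (hδ' : δ ≤ 1 / 2)
    (hW : ∀ i, #{s ∈ Ico (Q ^ i) (Q ^ (i + 1)) | s ∈ S} ≤ B)
    (hB : B * (6 * δ * Q ^ 2 + 2 * Q + 4) ≤ (Q : ℝ) ^ 2 / 4) (i : ℕ) :
    (survivingCells S Q δ i).Nonempty := by
  induction i with
  | zero => simp [survivingCells]
  | succ i ih =>
    have h := mul_card_survivingCells_le hS hQ hδ hδ' hW hB i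
    have hpos : (0 : ℝ) < Q * #(survivingCells S Q δ i) := by
      have : (0 : ℝ) < Q := by norm_cast; omega
      have := card_pos.2 ih
      positivity
    rw [← card_pos]
    exact_mod_cast (by linarith : (0 : ℝ) < #(survivingCells S Q δ (i + 1)))

theorem exists_forall_le_abs_mul_sub (hS : 0 ∉ S) (hQ : 2 ≤ Q) (hδ : 0 ≤ δ) (hδ' : δ ≤ 1 / 2)
    (hW : ∀ i, #{s ∈ Ico (Q ^ i) (Q ^ (i + 1)) | s ∈ S} ≤ B)
    (hB : B * (6 * δ * Q ^ 2 + 2 * Q + 4) ≤ (Q : ℝ) ^ 2 / 4) :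
    ∃ α : ℝ, ∀ s ∈ S, ∀ p : ℤ, δ ≤ |s * α - p| := by
  have hQ0 : 0 < Q := by omega
  set K : ℕ → Set ℝ := fun i => ⋃ k ∈ survivingCells S Q δ i, gridCell ((Q : ℝ) ^ i) k
  have hmono : ∀ i, K (i + 1) ⊆ K i := by
    intro i
    refine Set.iUnion₂_subset fun k hk => ?_
    exact (gridCell_subset_gridCell_ediv hQ0 i k).trans
      (Set.subset_biUnion_of_mem (u := fun k => gridCell ((Q : ℝ) ^ i) k)
        ((mem_gridChildren hQ0).1 (survivingCells_succ_subset i hk)))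
  have hne : ∀ i, (K i).Nonempty := by
    intro i
    obtain ⟨k, hk⟩ := survivingCells_nonempty hS hQ hδ hδ' hW hB i
    exact ⟨k / (Q : ℝ) ^ i, Set.mem_biUnion hk
      ⟨le_rfl, div_le_div_of_nonneg_right (by linarith) (by positivity)⟩⟩
  obtain ⟨α, hα⟩ := IsCompact.nonempty_iInter_of_sequence_nonempty_isCompact_isClosed K hmono hne
    ((survivingCells S Q δ 0).finite_toSet.isCompact_biUnion fun _ _ => isCompact_Icc)
    fun i => (survivingCells S Q δ i).finite_toSet.isClosed_biUnion fun _ _ => isClosed_Icc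
  refine ⟨α, fun s hs p => ?_⟩
  obtain ⟨k, hk, hαk⟩ := Set.mem_iUnion₂.1 (Set.mem_iInter.1 hα (s + 1))
  have hdisj := disjoint_of_mem_survivingCells hk hs (Nat.lt_pow_self (by omega))
  by_contra! hp
  exact Set.disjoint_left.1 hdisj hαk ⟨p, hp⟩

end existence

section lacunary

variable {n : ℕ → ℕ} {r : ℝ}

lemma pow_mul_le_of_lacunary (hr : 0 ≤ r) (hlac : ∀ j, 1 ≤ j → r * n j ≤ n (j + 1)) {j : ℕ}
    (hj : 1 ≤ j) (d : ℕ) : r ^ d * n j ≤ n (j + d) := by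
  induction d with
  | zero => simp
  | succ d ih =>
    calc r ^ (d + 1) * n j = r * (r ^ d * n j) := by ring
      _ ≤ r * n (j + d) := by gcongr
      _ ≤ n (j + (d + 1)) := hlac (j + d) (by omega)

lemma card_Ico_filter_le_of_lacunary (hr : 1 ≤ r) (hlac : ∀ j, 1 ≤ j → r * n j ≤ n (j + 1))
    [DecidablePred (· ∈ {k : ℕ | ∃ j, 1 ≤ j ∧ n j = k})] {b x y : ℕ} (hxy : (y : ℝ) ≤ r ^ b * x) :
    #{s ∈ Ico x y | s ∈ {k : ℕ | ∃ j, 1 ≤ j ∧ n j = k}} ≤ b := by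
  classical
  by_cases hex : ∃ j, 1 ≤ j ∧ n j ∈ Ico x y
  swap
  · rw [filter_eq_empty_iff.2 fun s hs ⟨j, hj, hjs⟩ => hex ⟨j, hj, hjs ▸ hs⟩, card_empty]
    exact Nat.zero_le b
  obtain ⟨hj₀, hxj₀⟩ := Nat.find_spec hex
  calc _ ≤ #((Ico (Nat.find hex) (Nat.find hex + b)).image n) := by
        refine card_le_card fun s hs => ?_
        obtain ⟨hs, j, hj, rfl⟩ := mem_filter.1 hs
        have hmin : Nat.find hex ≤ j := Nat.find_min' hex ⟨hj, hs⟩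
        refine mem_image.2 ⟨j, mem_Ico.2 ⟨hmin, not_le.1 fun hbj => ?_⟩, rfl⟩
        -- `n j ≥ r ^ b * n j₀ ≥ r ^ b * x ≥ y`, leaving the window
        obtain ⟨d, rfl⟩ := Nat.exists_eq_add_of_le hmin
        have := pow_mul_le_of_lacunary (by linarith) hlac hj₀ d
        have : r ^ b ≤ r ^ d := pow_le_pow_right₀ hr (by omega)
        have : (x : ℝ) ≤ n (Nat.find hex) := by exact_mod_cast (mem_Ico.1 hxj₀).1
        have : (n (Nat.find hex + d) : ℝ) < y := by exact_mod_cast (mem_Ico.1 hs).2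
        nlinarith [pow_nonneg (by linarith : (0 : ℝ) ≤ r) b]
    _ ≤ b := card_image_le.trans (by simp)

end lacunary

lemma mul_add_le_sq_div_four {Q b : ℕ} {δ : ℝ} (hQ : 2 ≤ Q) (hbδ : b * δ ≤ 1 / 100)
    (hbQ : 100 * b ≤ Q) : b * (6 * δ * Q ^ 2 + 2 * Q + 4) ≤ (Q : ℝ) ^ 2 / 4 := by
  have hQ' : (2 : ℝ) ≤ Q := by exact_mod_cast hQ
  have hbQ' : 100 * (b : ℝ) ≤ Q := by exact_mod_cast hbQ
  nlinarith [mul_le_mul_of_nonneg_right hbδ (sq_nonneg (Q : ℝ)), Nat.cast_nonneg (α := ℝ) b]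

lemma one_le_log_inv {ε : ℝ} (hε : 0 < ε) (hε' : ε < 1 / 4) : 1 ≤ Real.log ε⁻¹ := by
  rw [Real.le_log_iff_exp_le (by positivity)]
  have : 4 < ε⁻¹ := by rw [lt_inv_comm₀ (by norm_num) hε]; linarith
  linarith [Real.exp_one_lt_d9]

lemma ceil_log_div_log_one_add_mul_le {ε : ℝ} (hε : 0 < ε) (hε' : ε < 1 / 4) {Q : ℕ}
    (hQ : 1 ≤ Q) (hQε : (Q : ℝ) ≤ 2 * ε⁻¹ ^ 8) :
    ⌈Real.log Q / Real.log (1 + ε)⌉₊ * ε ≤ 12 * Real.log ε⁻¹ := by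
  have hL := one_le_log_inv hε hε'
  have hlogQ : Real.log Q ≤ 9 * Real.log ε⁻¹ := by
    have h2 : Real.log 2 < 1 := by linarith [Real.log_two_lt_d9]
    calc Real.log Q ≤ Real.log (2 * ε⁻¹ ^ 8) := Real.log_le_log (by exact_mod_cast hQ) hQε
      _ = Real.log 2 + 8 * Real.log ε⁻¹ := by
          rw [Real.log_mul (by norm_num) (by positivity), Real.log_pow]; push_cast; ring
      _ ≤ 9 * Real.log ε⁻¹ := by linarith
  have hlog : 4 / 5 * ε ≤ Real.log (1 + ε) := by
    have := Real.one_sub_inv_le_log_of_pos (show 0 < 1 + ε by linarith)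
    have : 4 / 5 * ε ≤ 1 - (1 + ε)⁻¹ := by
      rw [show 1 - (1 + ε)⁻¹ = ε / (1 + ε) by field_simp; ring, le_div_iff₀ (by linarith)]
      nlinarith
    linarith
  have hb : (⌈Real.log Q / Real.log (1 + ε)⌉₊ : ℝ) < Real.log Q / Real.log (1 + ε) + 1 :=
    Nat.ceil_lt_add_one (div_nonneg (Real.log_nonneg (by exact_mod_cast hQ)) (by linarith))
  have : Real.log Q / Real.log (1 + ε) * ε ≤ 45 / 4 * Real.log ε⁻¹ := by
    rw [div_mul_eq_mul_div, div_le_iff₀ (by linarith)]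
    nlinarith [Real.log_nonneg (show (1 : ℝ) ≤ Q by exact_mod_cast hQ)]
  nlinarith

lemma exists_cantor_parameters {ε : ℝ} (hε : 0 < ε) (hε' : ε < 1 / 4) :
    ∃ Q b : ℕ, ∃ δ : ℝ, 2 ≤ Q ∧ 0 < δ ∧ δ ≤ 1 / 2 ∧ (Q : ℝ) ≤ (1 + ε) ^ b ∧
      b * (6 * δ * Q ^ 2 + 2 * Q + 4) ≤ (Q : ℝ) ^ 2 / 4 ∧
      (⌈δ⁻¹⌉₊ : ℝ) ≤ 1 + 1200 * ε⁻¹ * |Real.log ε| := by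
  set L := Real.log ε⁻¹
  have hL : 1 ≤ L := one_le_log_inv hε hε'
  have hLε : L ≤ ε⁻¹ := by linarith [Real.log_le_sub_one_of_pos (inv_pos.2 hε)]
  have hε4 : 4 ≤ ε⁻¹ := by rw [le_inv_comm₀ (by norm_num) hε]; linarith
  set Q := ⌈ε⁻¹ ^ 8⌉₊
  have hQ₁ : ε⁻¹ ^ 8 ≤ Q := Nat.le_ceil _
  have hQ₂ : (Q : ℝ) ≤ 2 * ε⁻¹ ^ 8 := by
    linarith [Nat.ceil_lt_add_one (by positivity : 0 ≤ ε⁻¹ ^ 8),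
      one_le_pow₀ (n := 8) (by linarith : 1 ≤ ε⁻¹)]
  have hQ : 2 ≤ Q := by
    have : (2 : ℝ) ≤ Q := le_trans (by nlinarith [pow_le_pow_left₀ (by norm_num) hε4 8]) hQ₁
    exact_mod_cast this
  set b := ⌈Real.log Q / Real.log (1 + ε)⌉₊
  have hbε := ceil_log_div_log_one_add_mul_le hε hε' (by omega) hQ₂
  have hlog : 0 < Real.log (1 + ε) := Real.log_pos (by linarith)
  refine ⟨Q, b, ε / (1200 * L), hQ, by positivity, ?_, ?_, ?_, ?_⟩
  · rw [div_le_iff₀ (by positivity)]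
    nlinarith
  · rw [← Real.log_le_log_iff (by positivity) (by positivity), Real.log_pow,
      ← div_le_iff₀ hlog]
    exact Nat.le_ceil _
  · refine mul_add_le_sq_div_four hQ ?_ ?_
    · rw [mul_div_assoc', div_le_iff₀ (by positivity)]
      linarith
    · have hb : (b : ℝ) ≤ 12 * ε⁻¹ ^ 2 := by
        have h := mul_le_mul_of_nonneg_right (hbε.trans (by linarith : 12 * L ≤ 12 * ε⁻¹))
          (inv_nonneg.2 hε.le)
        rwa [mul_assoc, mul_inv_cancel₀ hε.ne', mul_one, mul_assoc, ← sq] at h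
      have h6 : (4 : ℝ) ^ 6 ≤ ε⁻¹ ^ 6 := pow_le_pow_left₀ (by norm_num) hε4 6
      have : 100 * (b : ℝ) ≤ Q := by nlinarith [sq_nonneg ε⁻¹]
      exact_mod_cast this
  · have habs : |Real.log ε| = L := by
      rw [abs_of_neg (Real.log_neg hε (by linarith)), ← Real.log_inv]
    rw [habs, inv_div]
    calc (⌈1200 * L / ε⌉₊ : ℝ) ≤ 1200 * L / ε + 1 := (Nat.ceil_lt_add_one (by positivity)).le
      _ = 1 + 1200 * ε⁻¹ * L := by ring

/-- There is a universal constant `c > 0` such that for every `0 < ε < 1/4` and every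
sequence of positive integers with `n (j+1) ≥ (1+ε) * n j` for all `j ≥ 1`, the chromatic
number of the distance graph of `S = {n j : j ≥ 1}` is at most `1 + c⁻¹ * ε⁻¹ * |log ε|`. -/
theorem chromatic_number_lacunary_distance_graph :
    ∃ c : ℝ, 0 < c ∧
      ∀ ε : ℝ, 0 < ε → ε < 1 / 4 →
        ∀ n : ℕ → ℕ, (∀ j, 1 ≤ j → 0 < n j) →
          (∀ j, 1 ≤ j → (1 + ε) * (n j : ℝ) ≤ (n (j + 1) : ℝ)) →
          ∃ m : ℕ, (m : ℝ) ≤ 1 + c⁻¹ * ε⁻¹ * |Real.log ε| ∧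
            (distGraph {k : ℕ | ∃ j, 1 ≤ j ∧ n j = k}).chromaticNumber ≤ (m : ℕ∞) := by
  classical
  refine ⟨1 / 1200, by norm_num, fun ε hε hε' n hpos hlac => ?_⟩
  obtain ⟨Q, b, δ, hQ, hδ, hδ', hQb, hbudget, hcolors⟩ := exists_cantor_parameters hε hε'
  have hS : 0 ∉ {k : ℕ | ∃ j, 1 ≤ j ∧ n j = k} := fun ⟨j, hj, hj0⟩ => (hpos j hj).ne' hj0
  have hW (i : ℕ) := card_Ico_filter_le_of_lacunary (by linarith) hlac
    (x := Q ^ i) (y := Q ^ (i + 1)) (by push_cast; rw [pow_succ, mul_comm]; gcongr)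
  obtain ⟨α, hα⟩ := exists_forall_le_abs_mul_sub hS hQ hδ.le hδ' hW hbudget
  refine ⟨⌈δ⁻¹⌉₊, by simpa using hcolors, ?_⟩
  exact (distGraph_colorable_of_le_abs_mul_sub hδ hα).chromaticNumber_le
end

section
/- Let M ≥ 4 be an integer and let (n_j)_{j≥1} be a strictly increasing sequence of positive integers satisfying n_{j+M} > 2·n_j for all j ≥ 1. Then the chromatic number of the distance graph G(S) with S = {n_j : j ≥ 1} is at most ⌈240·M·log₂ M⌉. -/
/-!
Colouring `v ∈ ℤ` by `⌊K * fract (α * v)⌋` is proper as soon as `α * s` stays at distance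
`≥ 1 / K` from `ℤ` for all `s ∈ S`; such an `α` is found in a decreasing sequence of unions of
dyadic intervals. From level `t` to level `t + 1`, one discards the children of the surviving
intervals on which `α * s` comes within `1 / K` of `ℤ` for some `s ∈ S ∩ [2 ^ t, 2 ^ (t + 1))`.
Along each residue class mod `M` the sequence more than doubles, so there are at most `M` such
`s`, and each of them kills `O(2 ^ c / K + 1)` of the `2 ^ (c + 1)` descendants of a cell of
level `t - c`. Counting the survivors against their ancestors `c` levels up shows that their
number grows by a factor `≥ 2 - 1 / c` per level as soon as `25 M c ≤ K` and `32 K ≤ 2 ^ c`;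
for `K = ⌈240 M log₂ M⌉` the choice `c = ⌊K / (25 M)⌋` works.
-/

open Finset
open scoped Classical

theorem distGraph_colorable_of_one_div_le_abs_mul_sub (S : Set ℕ) {K : ℕ} (hK : 0 < K) (α : ℝ)
    (hα : ∀ s ∈ S, 0 < s → ∀ z : ℤ, 1 / (K : ℝ) ≤ |α * s - z|) :
    (distGraph S).Colorable K := by
  have hKR : (0 : ℝ) < K := by exact_mod_cast hK
  let colour (v : ℤ) : Fin K := ⟨⌊K * Int.fract (α * v)⌋₊, by
    rw [Nat.floor_lt (by positivity)]
    nlinarith [Int.fract_lt_one (α * v)]⟩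
  refine ⟨SimpleGraph.Coloring.mk colour fun {v w} hvw heq => ?_⟩
  wlog hwv : w < v generalizing v w
  · exact this hvw.symm heq.symm (lt_of_le_of_ne (not_lt.1 hwv) hvw.1)
  have hs : ((v - w).natAbs : ℝ) = v - w := by
    rw [Nat.cast_natAbs, abs_of_pos (sub_pos.2 hwv)]; push_cast; ring
  have hfloor : ⌊K * Int.fract (α * v)⌋ = ⌊K * Int.fract (α * w)⌋ := by
    rw [← Int.natCast_floor_eq_floor (by positivity), ← Int.natCast_floor_eq_floor (by positivity)]
    exact congrArg (fun i : Fin K => (i : ℤ)) heq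
  have hclose : |α * (v - w).natAbs - (⌊α * v⌋ - ⌊α * w⌋ : ℤ)| < 1 / K := by
    rw [lt_div_iff₀ hKR, hs, ← abs_of_pos hKR, ← abs_mul]
    convert Int.abs_sub_lt_one_of_floor_eq_floor hfloor using 2
    rw [Int.fract, Int.fract]; push_cast; ring
  exact (hα _ hvw.2 (Int.natAbs_pos.2 (sub_ne_zero.2 hvw.1)) _).not_gt hclose

theorem two_mul_lt_of_modEq {M : ℕ} {n : ℕ → ℕ} (hdouble : ∀ j, 1 ≤ j → 2 * n j < n (j + M))
    {i i' : ℕ} (hi : 1 ≤ i) (hlt : i < i') (hmod : i ≡ i' [MOD M]) : 2 * n i < n i' := by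
  obtain ⟨q, hq⟩ := (Nat.modEq_iff_dvd' hlt.le).1 hmod
  obtain ⟨k, rfl⟩ : ∃ k, q = k + 1 :=
    Nat.exists_eq_add_one.2 (Nat.pos_of_ne_zero (by rintro rfl; omega))
  obtain rfl : i' = i + (k + 1) * M := by rw [mul_comm]; omega
  clear hlt hmod hq
  induction k with
  | zero => simpa using hdouble i hi
  | succ k ih =>
    have := hdouble (i + (k + 1) * M) (by omega)
    rw [show i + (k + 1 + 1) * M = i + (k + 1) * M + M by ring]
    omega

theorem card_filter_Ico_two_pow_le {M : ℕ} {n : ℕ → ℕ}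
    (hdouble : ∀ j, 1 ≤ j → 2 * n j < n (j + M)) (t : ℕ) :
    #{s ∈ Ico (2 ^ t) (2 ^ (t + 1)) | ∃ j, 1 ≤ j ∧ n j = s} ≤ M := by
  have hM : 0 < M := Nat.pos_of_ne_zero fun h => by
    have := hdouble 1 le_rfl
    rw [h, add_zero] at this
    omega
  set F := {s ∈ Ico (2 ^ t) (2 ^ (t + 1)) | ∃ j, 1 ≤ j ∧ n j = s}
  choose! idx hidx_pos hidx using fun s (hs : ∃ j, 1 ≤ j ∧ n j = s) => hs
  have hsep : ∀ s ∈ F, ∀ s' ∈ F, idx s ≡ idx s' [MOD M] → ¬ idx s < idx s' := by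
    intro s hs s' hs' hmod hlt
    obtain ⟨hs, hS⟩ := mem_filter.1 hs
    obtain ⟨hs', hS'⟩ := mem_filter.1 hs'
    have := two_mul_lt_of_modEq hdouble (hidx_pos s hS) hlt hmod
    rw [hidx s hS, hidx s' hS'] at this
    rw [mem_Ico] at hs hs'
    omega
  calc #F ≤ #(range M) := card_le_card_of_injOn (idx · % M)
        (fun s _ => mem_coe.2 (mem_range.2 (Nat.mod_lt _ hM))) fun s hs s' hs' hmod => ?_
    _ = M := card_range M
  have := le_antisymm (not_lt.1 (hsep s' hs' s hs hmod.symm)) (not_lt.1 (hsep s hs s' hs' hmod))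
  rw [← hidx s (mem_filter.1 hs).2, ← hidx s' (mem_filter.1 hs').2, this]

theorem le_abs_sub_intCast {q : ℤ} {δ y : ℝ} (hlow : q + δ ≤ y) (hhigh : y + δ ≤ q + 1)
    (z : ℤ) : δ ≤ |y - z| := by
  rcases le_or_gt z q with hz | hz
  · have : (z : ℝ) ≤ q := by exact_mod_cast hz
    exact le_abs.2 (Or.inl (by linarith))
  · have : (q : ℝ) + 1 ≤ z := by exact_mod_cast hz
    exact le_abs.2 (Or.inr (by linarith))

/-- Sufficient condition, in terms of the residue `a * s % N`, for `x * s` to be at distance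
`≥ 1 / K` from `ℤ` for all `x ∈ [a / N, (a + 1) / N]`. -/
def IsSafeCell (N K s a : ℕ) : Prop :=
  N ≤ K * (a * s % N) ∧ K * (a * s % N + s) + N ≤ K * N

theorem IsSafeCell.one_div_le_abs_mul_sub {N K s a : ℕ} (h : IsSafeCell N K s a) (hN : 0 < N)
    {x : ℝ} (hx : x ∈ Set.Icc (a / N : ℝ) ((a + 1) / N)) (z : ℤ) :
    1 / (K : ℝ) ≤ |x * s - z| := by
  obtain ⟨h₁, h₂⟩ := h
  set m := a * s % N
  set q := a * s / N
  have hK : 0 < K := Nat.pos_of_ne_zero fun hK => by simp [hK] at h₁; omega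
  have hNR : (0 : ℝ) < N := by exact_mod_cast hN
  have hKR : (0 : ℝ) < K := by exact_mod_cast hK
  have hdm : (a : ℝ) * s = N * q + m := by exact_mod_cast (Nat.div_add_mod _ _).symm
  have h₁' : (N : ℝ) ≤ K * m := by exact_mod_cast h₁
  have h₂' : (K : ℝ) * (m + s) + N ≤ K * N := by exact_mod_cast h₂
  apply le_abs_sub_intCast (q := q) <;> rw [Int.cast_natCast]
  · calc (q : ℝ) + 1 / K ≤ q + m / N := by
          have : 1 / (K : ℝ) ≤ m / N := by rw [div_le_div_iff₀ hKR hNR]; linarith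
          linarith
      _ = a / N * s := by rw [div_mul_eq_mul_div, hdm]; field_simp
      _ ≤ x * s := by gcongr; exact hx.1
  · calc x * s + 1 / K ≤ (a + 1) / N * s + 1 / K := by gcongr; exact hx.2
      _ = q + ((m + s) / N + 1 / K) := by
          rw [div_mul_eq_mul_div, add_mul, hdm]; field_simp; ring
      _ ≤ q + 1 := by
          gcongr; rw [div_add_div _ _ hNR.ne' hKR.ne', div_le_one (by positivity)]; linarith

/-- An unsafe residue `a * s % N` lies within `N / K + s + 1` of `0` modulo `N`. -/
theorem mod_lt_of_not_isSafeCell {N K s a : ℕ} (hN : 0 < N) (hK : 0 < K)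
    (h : ¬ IsSafeCell N K s a) : (a * s + (N / K + s + 1)) % N < 2 * (N / K + s + 1) := by
  rw [IsSafeCell, not_and_or, not_le, not_le] at h
  rw [← Nat.mod_add_mod]
  have hm : a * s % N < N := Nat.mod_lt _ hN
  have hNK : N < K * (N / K + 1) := Nat.lt_mul_div_succ N hK
  generalize a * s % N = m at *
  generalize hr : N / K + s + 1 = r
  rcases h with h | h
  · have : m ≤ N / K := (Nat.le_div_iff_mul_le hK).2 (by rw [mul_comm]; exact h.le)
    by_cases hmr : m + r < N
    · rw [Nat.mod_eq_of_lt hmr]; omega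
    · exact (Nat.mod_lt _ hN).trans_le (by omega)
  · have hNr : N ≤ m + r := by
      by_contra hlt
      have := Nat.mul_le_mul_left K (show m + s + (N / K + 1) ≤ N by omega)
      nlinarith
    rw [Nat.mod_eq_sub_mod hNr]
    exact (Nat.mod_le _ _).trans_lt (by omega)

theorem card_le_of_forall_mul_add_mem_Ico {Y : Finset ℕ} {s w x h : ℕ} (hs : 0 < s)
    (hY : ∀ a ∈ Y, a * s + w ∈ Ico x (x + h)) : #Y ≤ (h + s - 1) / s := by
  rcases Y.eq_empty_or_nonempty with rfl | hne
  · simp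
  set a₀ := Y.min' hne
  calc #Y ≤ #(Ico a₀ (a₀ + (h + s - 1) / s)) := card_le_card fun a ha => ?_
    _ = (h + s - 1) / s := by simp
  have h₀ := Y.min'_le a ha
  have ha' := mem_Ico.1 (hY a ha)
  have ha₀' := mem_Ico.1 (hY a₀ (Y.min'_mem hne))
  have hgap : (a - a₀ + 1) * s ≤ h + s - 1 := by
    have : (a - a₀) * s = a * s - a₀ * s := Nat.sub_mul _ _ _
    rw [add_one_mul]
    omega
  have := (Nat.le_div_iff_mul_le hs).2 hgap
  rw [mem_Ico]
  omega

theorem card_filter_mod_lt_le {N s w h A R : ℕ} (hN : 0 < N) (hs : 0 < s) (hR : R * s ≤ 2 * N) :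
    #{a ∈ Ico A (A + R) | (a * s + w) % N < h} ≤ 3 * ((h + s - 1) / s) := by
  set X := {a ∈ Ico A (A + R) | (a * s + w) % N < h}
  set k₀ := (A * s + w) / N
  have hk₀ : A * s + w < N * (k₀ + 1) := Nat.lt_mul_div_succ _ hN
  -- `a * s + w` ranges over an interval of length `< 2 * N`, so its quotient by `N` takes at
  -- most three values
  calc #X ≤ (h + s - 1) / s * #(X.image fun a => (a * s + w) / N) :=
        card_le_mul_card_image X _ fun k _ =>
          card_le_of_forall_mul_add_mem_Ico (w := w) (x := N * k) hs ?_
    _ ≤ (h + s - 1) / s * #(Icc k₀ (k₀ + 2)) := Nat.mul_le_mul_left _ (card_le_card ?_)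
    _ = 3 * ((h + s - 1) / s) := by
        rw [Nat.card_Icc, show k₀ + 2 + 1 - k₀ = 3 by omega, mul_comm]
  · intro a ha
    obtain ⟨ha, hk⟩ := mem_filter.1 ha
    have := Nat.div_add_mod (a * s + w) N
    rw [hk] at this
    have := (mem_filter.1 ha).2
    rw [mem_Ico]
    omega
  · intro k hk
    obtain ⟨a, ha, rfl⟩ := mem_image.1 hk
    obtain ⟨⟨ha₁, ha₂⟩, -⟩ := mem_filter.1 ha |>.imp_left mem_Ico.1
    have hspan : a * s + w < A * s + w + 2 * N := by
      have : a * s < A * s + R * s := by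
        rw [← add_mul]; exact Nat.mul_lt_mul_of_pos_right ha₂ hs
      omega
    rw [mem_Icc]
    constructor
    · exact Nat.div_le_div_right (by gcongr)
    · rw [← Nat.lt_succ_iff, Nat.div_lt_iff_lt_mul hN]
      nlinarith

theorem card_filter_not_isSafeCell_le {K s t : ℕ} (c A : ℕ) (hK : 0 < K) (hs : 2 ^ t ≤ s)
    (hs' : s < 2 ^ (t + 1)) :
    K * #{a ∈ Ico A (A + 2 ^ (c + 1)) | ¬ IsSafeCell (2 ^ (t + 1 + c)) K s a} ≤
      12 * (2 ^ c + K) := by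
  set N := 2 ^ (t + 1 + c)
  have hN : N = 2 * 2 ^ c * 2 ^ t := by simp only [N]; rw [pow_add, pow_succ]; ring
  have hs₀ : 0 < s := lt_of_lt_of_le (by positivity) hs
  set B := (2 * (N / K + s + 1) + s - 1) / s
  have hcount : #{a ∈ Ico A (A + 2 ^ (c + 1)) | ¬ IsSafeCell N K s a} ≤ 3 * B := by
    refine (card_le_card fun a ha => ?_).trans (card_filter_mod_lt_le (N := N)
      (w := N / K + s + 1) (A := A) (R := 2 ^ (c + 1)) (by positivity) hs₀ ?_)
    · rw [mem_filter] at ha ⊢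
      exact ⟨ha.1, mod_lt_of_not_isSafeCell (by positivity) hK ha.2⟩
    · calc 2 ^ (c + 1) * s ≤ 2 ^ (c + 1) * 2 ^ (t + 1) := by gcongr
        _ = 2 * N := by rw [hN]; ring
  have hB : s * B ≤ 2 * (N / K + s + 1) + s - 1 := Nat.mul_div_le _ _
  have hKN : K * (N / K) ≤ N := Nat.mul_div_le N K
  refine Nat.le_of_mul_le_mul_left ?_ hs₀
  calc s * (K * _) ≤ s * (K * (3 * B)) := by gcongr
    _ = 3 * K * (s * B) := by ring
    _ ≤ 3 * K * (2 * (N / K) + 3 * s + 1) := by gcongr; omega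
    _ = 6 * (K * (N / K)) + 9 * K * s + 3 * K := by ring
    _ ≤ 6 * N + 9 * K * s + 3 * K := by gcongr
    _ ≤ s * (12 * (2 ^ c + K)) := by
        rw [hN]; nlinarith [Nat.mul_le_mul_left (2 ^ c) hs]

def children (A : Finset ℕ) : Finset ℕ :=
  A.image (2 * ·) ∪ A.image (2 * · + 1)

theorem card_children (A : Finset ℕ) : #(children A) = 2 * #A := by
  rw [children, card_union_of_disjoint, card_image_of_injective _ fun a b h => by omega,
    card_image_of_injective _ fun a b (h : 2 * a + 1 = 2 * b + 1) => by omega, two_mul]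
  simp only [disjoint_left, mem_image]
  omega

theorem div_two_mem_of_mem_children {A : Finset ℕ} {a : ℕ} (h : a ∈ children A) : a / 2 ∈ A := by
  rcases mem_union.1 h with h | h <;> obtain ⟨b, hb, rfl⟩ := mem_image.1 h <;>
    convert hb using 1 <;> omega

theorem image_div_two_pow_succ_subset {A X : Finset ℕ} (hX : ∀ a ∈ X, a / 2 ∈ A) (j : ℕ) :
    X.image (· / 2 ^ (j + 1)) ⊆ A.image (· / 2 ^ j) := by
  intro b hb
  obtain ⟨a, ha, rfl⟩ := mem_image.1 hb
  exact mem_image.2 ⟨a / 2, hX a ha, by rw [Nat.div_div_eq_div_mul, pow_succ']⟩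

theorem two_mul_pow_le_two_mul_sub_one_pow {d n : ℕ} (h : n ≤ d) :
    (2 * d) ^ n ≤ 2 * (2 * d - 1) ^ n := by
  rcases Nat.eq_zero_or_pos d with rfl | hd
  · simp [Nat.le_zero.1 h]
  have hd' : (0 : ℝ) < 2 * d := by positivity
  have hbern : (1 : ℝ) / 2 ≤ (1 + -(1 / (2 * d))) ^ n := by
    refine le_trans ?_ (one_add_mul_le_pow ?_ n)
    · have : (n : ℝ) ≤ d := by exact_mod_cast h
      rw [mul_neg, mul_one_div, ← sub_eq_add_neg, le_sub_comm, div_le_iff₀ hd']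
      linarith
    · have : 1 / (2 * d : ℝ) ≤ 1 := by rw [div_le_one hd']; norm_cast; omega
      linarith
  have : ((2 * d) ^ n : ℝ) ≤ 2 * ((2 * d - 1 : ℕ) : ℝ) ^ n := by
    calc ((2 * d) ^ n : ℝ) = 2 * (2 * d) ^ n * (1 / 2) := by ring
      _ ≤ 2 * (2 * d) ^ n * (1 + -(1 / (2 * d))) ^ n := by gcongr
      _ = 2 * ((2 * d - 1 : ℕ) : ℝ) ^ n := by
          rw [mul_assoc, ← mul_pow, mul_add, mul_neg, mul_one_div_cancel hd'.ne']
          push_cast [show 1 ≤ 2 * d by omega]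
          ring
  exact_mod_cast this

/-- The cell `[a / 2 ^ (t + 1 + c), (a + 1) / 2 ^ (t + 1 + c)]` is safe for the elements of `S`
in the dyadic block `[2 ^ t, 2 ^ (t + 1))`. -/
def IsBlockSafe (S : Set ℕ) (K c t a : ℕ) : Prop :=
  ∀ s ∈ S, 2 ^ t ≤ s → s < 2 ^ (t + 1) → IsSafeCell (2 ^ (t + 1 + c)) K s a

/-- The cells `[a / 2 ^ (t + c), (a + 1) / 2 ^ (t + c)]`, `a ∈ safeCells S K c t`, that are safe
for the first `t` dyadic blocks of `S`. -/
noncomputable def safeCells (S : Set ℕ) (K c : ℕ) : ℕ → Finset ℕ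
  | 0 => range (2 ^ c)
  | t + 1 => {a ∈ children (safeCells S K c t) | IsBlockSafe S K c t a}

noncomputable def safeSet (S : Set ℕ) (K c t : ℕ) : Set ℝ :=
  ⋃ a ∈ safeCells S K c t, Set.Icc (a / 2 ^ (t + c) : ℝ) ((a + 1) / 2 ^ (t + c))

section SafeCells

variable {S : Set ℕ} {M K c : ℕ}

theorem card_children_not_isBlockSafe_le (hK : 0 < K)
    (hS : ∀ t, #{s ∈ Ico (2 ^ t) (2 ^ (t + 1)) | s ∈ S} ≤ M) (A : Finset ℕ) (t : ℕ) :
    K * #{a ∈ children A | ¬ IsBlockSafe S K c t a} ≤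
      12 * M * (2 ^ c + K) * #(A.image (· / 2 ^ c)) := by
  set T := {s ∈ Ico (2 ^ t) (2 ^ (t + 1)) | s ∈ S}
  set I := #(A.image (· / 2 ^ c))
  set n := 12 * (2 ^ c + K) / K
  have hn : K * n ≤ 12 * (2 ^ c + K) := Nat.mul_div_le _ _
  have hper : ∀ s ∈ T, #{a ∈ children A | ¬ IsSafeCell (2 ^ (t + 1 + c)) K s a} ≤ n * I := by
    intro s hs
    obtain ⟨⟨hs₁, hs₂⟩, -⟩ := (mem_filter.1 hs).imp_left mem_Ico.1
    refine (card_le_mul_card_image (f := (· / 2 ^ (c + 1))) _ n fun b _ => ?_).trans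
      (Nat.mul_le_mul_left _ (card_le_card ?_))
    · rw [Nat.le_div_iff_mul_le hK, mul_comm]
      refine le_trans (Nat.mul_le_mul_left K (card_le_card fun a ha => ?_))
        (card_filter_not_isSafeCell_le c (b * 2 ^ (c + 1)) hK hs₁ hs₂)
      obtain ⟨haX, rfl⟩ := mem_filter.1 ha
      refine mem_filter.2 ⟨mem_Ico.2 ⟨Nat.div_mul_le_self _ _, ?_⟩, (mem_filter.1 haX).2⟩
      have := Nat.lt_div_mul_add (a := a) (b := 2 ^ (c + 1)) (by positivity)
      linarith
    · exact (image_subset_image (filter_subset _ _)).trans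
        (image_div_two_pow_succ_subset (fun a ha => div_two_mem_of_mem_children ha) c)
  calc K * #{a ∈ children A | ¬ IsBlockSafe S K c t a}
      ≤ K * #(T.biUnion fun s => {a ∈ children A | ¬ IsSafeCell (2 ^ (t + 1 + c)) K s a}) := by
        gcongr
        intro a ha
        obtain ⟨ha, hbad⟩ := mem_filter.1 ha
        simp only [IsBlockSafe, not_forall, exists_prop] at hbad
        obtain ⟨s, hs, hs₁, hs₂, hbad⟩ := hbad
        exact mem_biUnion.2 ⟨s, mem_filter.2 ⟨mem_Ico.2 ⟨hs₁, hs₂⟩, hs⟩, mem_filter.2 ⟨ha, hbad⟩⟩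
    _ ≤ K * (#T * (n * I)) := by
        gcongr
        exact card_biUnion_le.trans (sum_le_card_nsmul _ _ _ hper)
    _ ≤ K * (M * (n * I)) := by gcongr; exact hS t
    _ = M * (K * n) * I := by ring
    _ ≤ M * (12 * (2 ^ c + K)) * I := by gcongr
    _ = 12 * M * (2 ^ c + K) * I := by ring

/-- `A.image (· / 2 ^ c)` is the set of ancestors, `c` levels up, of the cells of `A`. -/
theorem mul_card_le_card_filter_children (hK : 0 < K) (hc : 32 * K ≤ 2 ^ c)
    (hMc : 25 * M * c ≤ K) (hS : ∀ t, #{s ∈ Ico (2 ^ t) (2 ^ (t + 1)) | s ∈ S} ≤ M)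
    {A : Finset ℕ} (hA : (2 * c - 1) ^ c * #(A.image (· / 2 ^ c)) ≤ c ^ c * #A) (t : ℕ) :
    (2 * c - 1) * #A ≤ c * #{a ∈ children A | IsBlockSafe S K c t a} := by
  set I := #(A.image (· / 2 ^ c))
  set bad := #{a ∈ children A | ¬ IsBlockSafe S K c t a}
  have hc₀ : 0 < c := Nat.pos_of_ne_zero fun h => by simp [h] at hc; omega
  have hsplit : #{a ∈ children A | IsBlockSafe S K c t a} + bad = 2 * #A := by
    rw [card_filter_add_card_filter_not, card_children]
  have hbad : K * bad ≤ 12 * M * (2 ^ c + K) * I := card_children_not_isBlockSafe_le hK hS A t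
  have hI : 2 ^ c * I ≤ 2 * #A := by
    refine Nat.le_of_mul_le_mul_left ?_ (pow_pos hc₀ c)
    calc c ^ c * (2 ^ c * I) = (2 * c) ^ c * I := by ring
      _ ≤ 2 * (2 * c - 1) ^ c * I := by gcongr; exact two_mul_pow_le_two_mul_sub_one_pow le_rfl
      _ ≤ c ^ c * (2 * #A) := by nlinarith
  have hcbad : c * bad ≤ #A := by
    refine Nat.le_of_mul_le_mul_left ?_ (show 0 < 800 * K by omega)
    calc 800 * K * (c * bad) = 800 * c * (K * bad) := by ring
      _ ≤ 800 * c * (12 * M * (2 ^ c + K) * I) := by gcongr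
      _ = 384 * (25 * M * c) * (2 ^ c * I + K * I) := by ring
      _ ≤ 384 * K * (2 ^ c * I + K * I) := by gcongr
      _ ≤ 800 * K * #A := by
          have : 32 * (K * I) ≤ 2 ^ c * I := by rw [← mul_assoc]; gcongr
          rw [mul_comm 384 K, mul_comm 800 K, mul_assoc, mul_assoc]
          exact Nat.mul_le_mul_left K (by omega)
  have : (2 * c - 1) * #A + #A = 2 * c * #A := by
    rw [← add_one_mul, Nat.sub_add_cancel (by omega)]
  nlinarith

theorem div_two_mem_safeCells {t a : ℕ} (h : a ∈ safeCells S K c (t + 1)) :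
    a / 2 ∈ safeCells S K c t :=
  div_two_mem_of_mem_children (mem_filter.1 h).1

theorem isBlockSafe_of_mem_safeCells {t a : ℕ} (h : a ∈ safeCells S K c (t + 1)) :
    IsBlockSafe S K c t a :=
  (mem_filter.1 h).2

theorem pow_mul_card_image_safeCells_le (hK : 0 < K) (hc : 32 * K ≤ 2 ^ c)
    (hMc : 25 * M * c ≤ K) (hS : ∀ t, #{s ∈ Ico (2 ^ t) (2 ^ (t + 1)) | s ∈ S} ≤ M) (t : ℕ) :
    ∀ j ≤ c, (2 * c - 1) ^ j * #((safeCells S K c t).image (· / 2 ^ j)) ≤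
      c ^ j * #(safeCells S K c t) := by
  induction t with
  | zero =>
    intro j hj
    have hsub : (range (2 ^ c)).image (· / 2 ^ j) ⊆ range (2 ^ (c - j)) := by
      intro b hb
      obtain ⟨a, ha, rfl⟩ := mem_image.1 hb
      rw [mem_range, Nat.div_lt_iff_lt_mul (by positivity), ← pow_add, Nat.sub_add_cancel hj]
      exact mem_range.1 ha
    calc (2 * c - 1) ^ j * #((range (2 ^ c)).image (· / 2 ^ j))
        ≤ (2 * c) ^ j * 2 ^ (c - j) := by
          gcongr
          · omega
          · simpa using card_le_card hsub
      _ = c ^ j * #(range (2 ^ c)) := by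
          rw [card_range, mul_pow, mul_comm (2 ^ j), mul_assoc, ← pow_add,
            Nat.add_sub_cancel' hj]
  | succ t ih =>
    have hstep := mul_card_le_card_filter_children hK hc hMc hS (ih c le_rfl) t
    rintro (_ | j) hj
    · simp
    calc (2 * c - 1) ^ (j + 1) * #((safeCells S K c (t + 1)).image (· / 2 ^ (j + 1)))
        ≤ (2 * c - 1) * ((2 * c - 1) ^ j * #((safeCells S K c t).image (· / 2 ^ j))) := by
          rw [pow_succ', mul_assoc]
          exact Nat.mul_le_mul_left _ (Nat.mul_le_mul_left _
            (card_le_card (image_div_two_pow_succ_subset (fun a => div_two_mem_safeCells) j)))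
      _ ≤ (2 * c - 1) * (c ^ j * #(safeCells S K c t)) :=
          Nat.mul_le_mul_left _ (ih j (by omega))
      _ = c ^ j * ((2 * c - 1) * #(safeCells S K c t)) := by ring
      _ ≤ c ^ j * (c * #(safeCells S K c (t + 1))) := Nat.mul_le_mul_left _ hstep
      _ = c ^ (j + 1) * #(safeCells S K c (t + 1)) := by ring

theorem safeCells_nonempty (hK : 0 < K) (hc : 32 * K ≤ 2 ^ c)
    (hMc : 25 * M * c ≤ K) (hS : ∀ t, #{s ∈ Ico (2 ^ t) (2 ^ (t + 1)) | s ∈ S} ≤ M) (t : ℕ) :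
    (safeCells S K c t).Nonempty := by
  induction t with
  | zero => exact ⟨0, mem_range.2 (by positivity)⟩
  | succ t ih =>
    have hc₀ : 0 < c := Nat.pos_of_ne_zero fun h => by simp [h] at hc; omega
    have := mul_card_le_card_filter_children hK hc hMc hS
      (pow_mul_card_image_safeCells_le hK hc hMc hS t c le_rfl) t
    rw [← card_pos] at ih ⊢
    exact pos_of_mul_pos_right ((Nat.mul_pos (by omega) ih).trans_le this) hc₀.le

theorem safeSet_succ_subset (t : ℕ) : safeSet S K c (t + 1) ⊆ safeSet S K c t := by
  intro x hx
  simp only [safeSet, Set.mem_iUnion, Set.mem_Icc] at hx ⊢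
  obtain ⟨a, ha, hx₁, hx₂⟩ := hx
  have h2 : (2 : ℝ) ^ (t + 1 + c) = 2 * 2 ^ (t + c) := by ring
  refine ⟨a / 2, div_two_mem_safeCells ha, le_trans ?_ hx₁, hx₂.trans ?_⟩ <;>
    rw [h2, ← div_div] <;> gcongr
  · rw [le_div_iff₀ two_pos]; exact_mod_cast Nat.div_mul_le_self a 2
  · rw [div_le_iff₀ two_pos]; exact_mod_cast (show a + 1 ≤ (a / 2 + 1) * 2 by omega)

theorem exists_forall_mem_safeSet (hne : ∀ t, (safeCells S K c t).Nonempty) :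
    ∃ x : ℝ, ∀ t, x ∈ safeSet S K c t := by
  have hclosed (t : ℕ) : IsClosed (safeSet S K c t) :=
    isClosed_biUnion_finset fun _ _ => isClosed_Icc
  have hcompact : IsCompact (safeSet S K c 0) :=
    (safeCells S K c 0).finite_toSet.isCompact_biUnion fun _ _ => isCompact_Icc
  have hnonempty (t : ℕ) : (safeSet S K c t).Nonempty := by
    obtain ⟨a, ha⟩ := hne t
    refine ⟨a / 2 ^ (t + c), Set.mem_biUnion ha ⟨le_rfl, ?_⟩⟩
    gcongr; linarith
  simpa using IsCompact.nonempty_iInter_of_sequence_nonempty_isCompact_isClosed _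
    safeSet_succ_subset hnonempty hcompact hclosed

end SafeCells

theorem exists_forall_one_div_le_abs_mul_sub {S : Set ℕ} {M K c : ℕ} (hK : 0 < K)
    (hc : 32 * K ≤ 2 ^ c) (hMc : 25 * M * c ≤ K)
    (hS : ∀ t, #{s ∈ Ico (2 ^ t) (2 ^ (t + 1)) | s ∈ S} ≤ M) :
    ∃ α : ℝ, ∀ s ∈ S, 0 < s → ∀ z : ℤ, 1 / (K : ℝ) ≤ |α * s - z| := by
  obtain ⟨α, hα⟩ := exists_forall_mem_safeSet (safeCells_nonempty hK hc hMc hS)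
  refine ⟨α, fun s hs hs₀ z => ?_⟩
  set t := Nat.log 2 s
  obtain ⟨a, ha, hαa⟩ := Set.mem_iUnion₂.1 (hα (t + 1))
  refine (isBlockSafe_of_mem_safeCells ha s hs (Nat.pow_log_le_self 2 hs₀.ne')
    (Nat.lt_pow_succ_log_self one_lt_two s)).one_div_le_abs_mul_sub (by positivity) ?_ z
  simpa using hαa

theorem thirty_two_mul_le_two_pow_div {M K : ℕ} (hM : 4 ≤ M)
    (hK : 240 * M * Nat.log 2 M ≤ K) : 32 * K ≤ 2 ^ (K / (25 * M)) := by
  set l := Nat.log 2 M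
  set e := K / (25 * M)
  have hl : 2 ≤ l := Nat.le_log_of_pow_le (by norm_num) (by omega)
  have hMl : M < 2 ^ (l + 1) := Nat.lt_pow_succ_log_self (by norm_num) M
  have hKe : K < 25 * M * (e + 1) := Nat.lt_mul_div_succ K (by omega)
  have hle : 9 * l ≤ e := (Nat.le_div_iff_mul_le (by omega)).2 (by nlinarith)
  obtain ⟨y, hy⟩ : ∃ y, e = l + 1 + y := ⟨e - (l + 1), by omega⟩
  have hy2 : 2 ^ y = 2 ^ 14 * 2 ^ (y - 14) := by rw [← pow_add]; congr 1; omega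
  have hsmall : 800 * (e + 1) ≤ 2 ^ y := by
    have := Nat.lt_two_pow_self (n := y - 14)
    omega
  calc 32 * K ≤ 800 * (e + 1) * M := by nlinarith
    _ ≤ 2 ^ y * 2 ^ (l + 1) := Nat.mul_le_mul hsmall hMl.le
    _ = 2 ^ e := by rw [hy, ← pow_add, add_comm]

theorem chromatic_number_union_lacunary_general
    (M : ℕ) (hM : 4 ≤ M)
    (n : ℕ → ℕ)
    (hdouble : ∀ j, 1 ≤ j → 2 * n j < n (j + M)) :
    (distGraph {k : ℕ | ∃ j, 1 ≤ j ∧ n j = k}).chromaticNumber ≤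
      (⌈(240 : ℝ) * M * Real.logb 2 M⌉₊ : ℕ∞) := by
  set K := ⌈(240 : ℝ) * M * Real.logb 2 M⌉₊
  have hK : 240 * M * Nat.log 2 M ≤ K := by
    have hlog : (Nat.log 2 M : ℝ) ≤ Real.logb 2 M := by exact_mod_cast Real.natLog_le_logb M 2
    have : ((240 * M * Nat.log 2 M : ℕ) : ℝ) ≤ K :=
      le_trans (by push_cast; gcongr) (Nat.le_ceil _)
    exact_mod_cast this
  have hK₀ : 0 < K := by
    have := Nat.log_pos one_lt_two (by omega : 2 ≤ M)
    exact lt_of_lt_of_le (by positivity) hK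
  obtain ⟨α, hα⟩ := exists_forall_one_div_le_abs_mul_sub hK₀
    (thirty_two_mul_le_two_pow_div hM hK) (Nat.mul_div_le K (25 * M))
    (card_filter_Ico_two_pow_le hdouble)
  exact (distGraph_colorable_of_one_div_le_abs_mul_sub _ hK₀ α hα).chromaticNumber_le

/-- Let `M ≥ 4` and let `(n j)` be a strictly increasing sequence of positive integers
with `n (j + M) > 2 * n j` for all `j ≥ 1`. Then the chromatic number of the distance
graph of `S = {n j : j ≥ 1}` is at most `⌈240 * M * log₂ M⌉`. -/
theorem chromatic_number_union_lacunary
    (M : ℕ) (hM : 4 ≤ M)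
    (n : ℕ → ℕ) (hpos : ∀ j, 1 ≤ j → 0 < n j)
    (hmono : ∀ j, 1 ≤ j → n j < n (j + 1))
    (hdouble : ∀ j, 1 ≤ j → 2 * n j < n (j + M)) :
    (distGraph {k : ℕ | ∃ j, 1 ≤ j ∧ n j = k}).chromaticNumber ≤
      (⌈(240 : ℝ) * M * Real.logb 2 M⌉₊ : ℕ∞) :=
  chromatic_number_union_lacunary_general M hM n hdouble
end

section
/- Let S = {n_j : j ≥ 1} be a set of positive integers, let δ > 0, and suppose θ ∈ (0,1) satisfies ‖θ·n_j‖ > δ for all j ≥ 1. Then the chromatic number of the distance graph G(S) is at most ⌈δ⁻¹⌉. -/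
/-- Distance from a real number to the nearest integer. -/
noncomputable def distToInt (x : ℝ) : ℝ := |x - round x|

/-!
Colour `x ∈ ℤ` by the index of the arc `[i/N, (i+1)/N)`, `N = ⌈δ⁻¹⌉`, of the circle `ℝ/ℤ`
containing `θx`. Two integers of the same colour have `‖θ(x - y)‖ < 1/N ≤ δ`, so they are not
adjacent in `G(S)`.
-/

open SimpleGraph

lemma distToInt_le (x : ℝ) (m : ℤ) : distToInt x ≤ |x - m| := round_le x m

lemma distToInt_neg (x : ℝ) : distToInt (-x) = distToInt x := by
  refine le_antisymm ?_ ?_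
  · calc distToInt (-x) ≤ |-x - ((-round x : ℤ) : ℝ)| := distToInt_le _ _
      _ = distToInt x := by rw [distToInt, ← abs_neg]; push_cast; ring_nf
  · calc distToInt x ≤ |x - ((-round (-x) : ℤ) : ℝ)| := distToInt_le _ _
      _ = distToInt (-x) := by rw [distToInt, ← abs_neg]; push_cast; ring_nf

lemma distToInt_mul_natAbs (θ : ℝ) (k : ℤ) : distToInt (θ * k.natAbs) = distToInt (θ * k) := by
  rcases Int.natAbs_eq k with hk | hk <;> conv_rhs => rw [hk]
  · rfl
  · rw [Int.cast_neg, mul_neg, distToInt_neg, Int.cast_natCast]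

lemma distToInt_sub_le_abs_fract_sub (a b : ℝ) :
    distToInt (a - b) ≤ |Int.fract a - Int.fract b| := by
  convert distToInt_le (a - b) (⌊a⌋ - ⌊b⌋) using 2
  simp only [Int.fract, Int.cast_sub]
  ring

lemma abs_sub_lt_one_of_natFloor_eq {a b : ℝ} (ha : 0 ≤ a) (hb : 0 ≤ b) (h : ⌊a⌋₊ = ⌊b⌋₊) :
    |a - b| < 1 := by
  have ha_le := Nat.floor_le ha
  have hb_le := Nat.floor_le hb
  have ha_lt := Nat.lt_floor_add_one a
  have hb_lt := Nat.lt_floor_add_one b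
  rw [h] at ha_le ha_lt
  rw [abs_sub_lt_iff]
  constructor <;> linarith

noncomputable def arcIndex {N : ℕ} (hN : 0 < N) (t : ℝ) : Fin N :=
  ⟨⌊Int.fract t * N⌋₊, (Nat.floor_lt (by positivity)).2 <| by
    simpa using mul_lt_mul_of_pos_right (Int.fract_lt_one t) (Nat.cast_pos.2 hN)⟩

lemma distToInt_sub_lt_of_arcIndex_eq {N : ℕ} (hN : 0 < N) {a b : ℝ}
    (h : arcIndex hN a = arcIndex hN b) : distToInt (a - b) < (N : ℝ)⁻¹ := by
  have hNR : (0 : ℝ) < N := Nat.cast_pos.2 hN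
  have hscaled : |Int.fract a * N - Int.fract b * N| < 1 :=
    abs_sub_lt_one_of_natFloor_eq (by positivity) (by positivity) (Fin.val_eq_of_eq h)
  rw [← sub_mul, abs_mul, abs_of_pos hNR, ← lt_inv_mul_iff₀' hNR, mul_one] at hscaled
  exact (distToInt_sub_le_abs_fract_sub a b).trans_lt hscaled

lemma SimpleGraph.colorable_of_inv_le_distToInt {V : Type*} (G : SimpleGraph V) (f : V → ℝ)
    {N : ℕ} (hN : 0 < N) (hf : ∀ x y, G.Adj x y → (N : ℝ)⁻¹ ≤ distToInt (f x - f y)) :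
    G.Colorable N :=
  ⟨Coloring.mk (fun x => arcIndex hN (f x)) fun hxy hcol =>
    (hf _ _ hxy).not_gt (distToInt_sub_lt_of_arcIndex_eq hN hcol)⟩

lemma distToInt_mul_sub_of_distGraph_adj {S : Set ℕ} {δ θ : ℝ}
    (h : ∀ k ∈ S, δ < distToInt (θ * k)) {x y : ℤ} (hxy : (distGraph S).Adj x y) :
    δ < distToInt (θ * x - θ * y) := by
  have := h _ hxy.2
  rwa [distToInt_mul_natAbs, Int.cast_sub, mul_sub] at this

theorem chromatic_number_le_of_badly_approximable_general
    (S : Set ℕ)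
    (δ : ℝ) (hδ : 0 < δ)
    (θ : ℝ)
    (h : ∀ k ∈ S, δ < distToInt (θ * k)) :
    (distGraph S).chromaticNumber ≤ (⌈δ⁻¹⌉₊ : ℕ∞) := by
  have hN : 0 < ⌈δ⁻¹⌉₊ := Nat.ceil_pos.2 (inv_pos.2 hδ)
  have hNδ : (⌈δ⁻¹⌉₊ : ℝ)⁻¹ ≤ δ := inv_le_of_inv_le₀ hδ (Nat.le_ceil _)
  refine Colorable.chromaticNumber_le <|
    (distGraph S).colorable_of_inv_le_distToInt (fun x : ℤ => θ * x) hN fun x y hxy => ?_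
  exact hNδ.trans (distToInt_mul_sub_of_distGraph_adj h hxy).le

/-- Katznelson's observation: if `S` is a set of positive integers, `δ > 0` and
`θ ∈ (0,1)` satisfies `‖θ * k‖ > δ` for all `k ∈ S`, then the chromatic number of the
distance graph of `S` is at most `⌈δ⁻¹⌉`. -/
theorem chromatic_number_le_of_badly_approximable
    (S : Set ℕ) (hS : ∀ k ∈ S, 0 < k)
    (δ : ℝ) (hδ : 0 < δ)
    (θ : ℝ) (hθ : θ ∈ Set.Ioo (0 : ℝ) 1)
    (h : ∀ k ∈ S, δ < distToInt (θ * k)) :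
    (distGraph S).chromaticNumber ≤ (⌈δ⁻¹⌉₊ : ℕ∞) :=
  chromatic_number_le_of_badly_approximable_general S δ hδ θ h
end

section
/- Let (n_j)_{j≥1} be a sequence of positive integers satisfying n_{j+1} > 4·n_j for all j ≥ 1. Then ⋂_{j≥1} {θ ∈ [0,1) : ‖θ·n_j‖ > 1/4} ≠ ∅; that is, there exists θ ∈ [0,1) with ‖θ·n_j‖ > 1/4 for all j ≥ 1. -/
/-!
The window `lacunaryWindow N m` consists of the `θ` with `θ N ∈ [m + 5/16, m + 11/16]`, so that
`‖θ N‖ ≥ 5/16 > 1/4`. It is a closed interval of length `3/(8N)`, which multiplication by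
`N' > 4N` stretches to length `> 3/2 ≥ 1 + 3/8`, so it contains a whole window for `N'`.
Iterating gives nested nonempty compact intervals, and any `θ` in their intersection works.
-/

open Set

lemma le_distToInt {x δ : ℝ} {m : ℤ} (h₁ : m + δ ≤ x) (h₂ : x ≤ m + 1 - δ) :
    δ ≤ distToInt x := by
  unfold distToInt
  rcases le_or_gt (round x) m with h | h
  · have h' : (round x : ℝ) ≤ m := by exact_mod_cast h
    exact le_abs.mpr (Or.inl (by linarith))
  · have h' : (m : ℝ) + 1 ≤ round x := by exact_mod_cast h
    exact le_abs.mpr (Or.inr (by linarith))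

def lacunaryWindow (N : ℕ) (m : ℤ) : Set ℝ :=
  Icc ((m + 5 / 16) / N) ((m + 11 / 16) / N)

lemma quarter_lt_distToInt_of_mem_lacunaryWindow {N : ℕ} {m : ℤ} {θ : ℝ} (hN : 0 < N)
    (hθ : θ ∈ lacunaryWindow N m) : 1 / 4 < distToInt (θ * N) := by
  have hN' : (0 : ℝ) < N := by exact_mod_cast hN
  obtain ⟨h₁, h₂⟩ := hθ
  rw [div_le_iff₀ hN'] at h₁
  rw [le_div_iff₀ hN'] at h₂
  have := le_distToInt (m := m) (δ := 5 / 16) h₁ (by linarith)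
  linarith

lemma lacunaryWindow_nonempty (N : ℕ) (m : ℤ) : (lacunaryWindow N m).Nonempty :=
  nonempty_Icc.mpr (div_le_div_of_nonneg_right (by linarith) (Nat.cast_nonneg N))

lemma lacunaryWindow_zero_subset_Ico {N : ℕ} (hN : 0 < N) : lacunaryWindow N 0 ⊆ Ico 0 1 := by
  have hN' : (1 : ℝ) ≤ N := by exact_mod_cast hN
  rintro θ ⟨h₁, h₂⟩
  push_cast at h₁ h₂
  refine ⟨le_trans (by positivity) h₁, lt_of_le_of_lt h₂ ?_⟩
  rw [div_lt_one (by linarith)]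
  linarith

/-- The level of the first window for `N'` whose left end lies beyond that of
`lacunaryWindow N m`. -/
noncomputable def nextWindowLevel (N N' : ℕ) (m : ℤ) : ℤ :=
  ⌈(N' : ℝ) * ((m + 5 / 16) / N) - 5 / 16⌉

lemma lacunaryWindow_nextWindowLevel_subset {N N' : ℕ} (hN : 0 < N) (hNN' : 4 * N < N')
    (m : ℤ) : lacunaryWindow N' (nextWindowLevel N N' m) ⊆ lacunaryWindow N m := by
  have hN₀ : (0 : ℝ) < N := by exact_mod_cast hN
  have hN'₀ : (0 : ℝ) < N' := by exact_mod_cast hN.trans_le (by omega : N ≤ N')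
  have hratio : (11 : ℝ) * N ≤ 3 * N' := by
    have : 4 * (N : ℝ) + 1 ≤ N' := by exact_mod_cast hNN'
    linarith
  set c : ℝ := (m + 5 / 16) / N
  have hc_right : (m + 11 / 16 : ℝ) / N = c + 3 / (8 * N) := by
    simp only [c]; field_simp; ring
  have hlevel_ge : (N' : ℝ) * c - 5 / 16 ≤ nextWindowLevel N N' m := Int.le_ceil _
  have hlevel_lt : (nextWindowLevel N N' m : ℝ) < N' * c - 5 / 16 + 1 := Int.ceil_lt_add_one _
  apply Icc_subset_Icc
  · rw [le_div_iff₀ hN'₀]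
    linarith
  · calc ((nextWindowLevel N N' m : ℝ) + 11 / 16) / N'
        ≤ (N' * c + 11 / 8) / N' := div_le_div_of_nonneg_right (by linarith) hN'₀.le
      _ = c + 11 / (8 * N') := by field_simp
      _ ≤ c + 3 / (8 * N) := by
          rw [add_le_add_iff_left, div_le_div_iff₀ (by positivity) (by positivity)]
          linarith
      _ = _ := hc_right.symm

noncomputable def windowLevel (N : ℕ → ℕ) : ℕ → ℤ
  | 0 => 0
  | k + 1 => nextWindowLevel (N k) (N (k + 1)) (windowLevel N k)

lemma exists_forall_quarter_lt_distToInt {N : ℕ → ℕ} (hpos : ∀ k, 0 < N k)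
    (hlac : ∀ k, 4 * N k < N (k + 1)) :
    ∃ θ ∈ Ico (0 : ℝ) 1, ∀ k, 1 / 4 < distToInt (θ * N k) := by
  set I : ℕ → Set ℝ := fun k => lacunaryWindow (N k) (windowLevel N k)
  obtain ⟨θ, hθ⟩ : (⋂ k, I k).Nonempty :=
    IsCompact.nonempty_iInter_of_sequence_nonempty_isCompact_isClosed I
      (fun k => lacunaryWindow_nextWindowLevel_subset (hpos k) (hlac k) _)
      (fun k => lacunaryWindow_nonempty _ _) isCompact_Icc (fun _ => isClosed_Icc)
  rw [mem_iInter] at hθ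
  exact ⟨θ, lacunaryWindow_zero_subset_Ico (hpos 0) (hθ 0),
    fun k => quarter_lt_distToInt_of_mem_lacunaryWindow (hpos k) (hθ k)⟩

/-- If `(n j)` is a sequence of positive integers with `n (j+1) > 4 * n j` for all
`j ≥ 1`, then there is `θ ∈ [0,1)` with `‖θ * n j‖ > 1/4` for all `j ≥ 1`. -/
theorem four_lacunary_badly_approximable
    (n : ℕ → ℕ) (hpos : ∀ j, 1 ≤ j → 0 < n j)
    (hlac : ∀ j, 1 ≤ j → 4 * n j < n (j + 1)) :
    ∃ θ ∈ Set.Ico (0 : ℝ) 1, ∀ j, 1 ≤ j → (1 : ℝ) / 4 < distToInt (θ * n j) := by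
  obtain ⟨θ, hθ, hdist⟩ := exists_forall_quarter_lt_distToInt (N := fun k => n (k + 1))
    (fun k => hpos (k + 1) (by omega)) (fun k => hlac (k + 1) (by omega))
  refine ⟨θ, hθ, fun j hj => ?_⟩
  obtain ⟨k, rfl⟩ : ∃ k, j = k + 1 := ⟨j - 1, by omega⟩
  exact hdist k
end

section
/- For every real ε with 0 < ε < 1 there exists a sequence (n_j)_{j≥1} of positive integers satisfying n_{j+1} ≥ (1+ε)·n_j for all j ≥ 1 such that the chromatic number of the distance graph G(S) with S = {n_j : j ≥ 1} is strictly greater than ⌊ε⁻¹⌋. -/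
/-!
If `S` contains every distance `1, …, m`, then `{0, 1, …, m}` is a clique of `G(S)`, so
`χ(G(S)) ≥ m + 1`. With `m = ⌊ε⁻¹⌋` the sequence `1, 2, …, m, 2m, 4m, 8m, …` is such an `S`,
and it is lacunary with ratio `1 + ε`: up to `m` the ratio `(j + 1) / j ≥ 1 + 1/m ≥ 1 + ε`,
and afterwards it is `2 ≥ 1 + ε`.
-/

theorem distGraph_isClique_Icc {S : Set ℕ} {m : ℕ} (hS : Set.Icc 1 m ⊆ S) (a : ℤ) :
    (distGraph S).IsClique (Finset.Icc a (a + m) : Set ℤ) := by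
  intro x hx y hy hxy
  simp only [Finset.coe_Icc, Set.mem_Icc] at hx hy
  exact ⟨hxy, hS ⟨by omega, by omega⟩⟩

theorem lt_chromaticNumber_distGraph {S : Set ℕ} {m : ℕ} (hS : Set.Icc 1 m ⊆ S) :
    (m : ℕ∞) < (distGraph S).chromaticNumber := by
  have hcard : (Finset.Icc (0 : ℤ) (0 + m)).card = m + 1 := by simp
  have hclique := (distGraph_isClique_Icc hS 0).card_le_chromaticNumber
  rw [hcard] at hclique
  exact lt_of_lt_of_le (by exact_mod_cast m.lt_succ_self) hclique

def linearThenDoubling (m j : ℕ) : ℕ := if j ≤ m then j else m * 2 ^ (j - m)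

namespace linearThenDoubling

variable {m : ℕ}

theorem pos (hm : 1 ≤ m) {j : ℕ} (hj : 1 ≤ j) : 0 < linearThenDoubling m j := by
  unfold linearThenDoubling
  split_ifs <;> positivity

theorem Icc_subset_range : Set.Icc 1 m ⊆ {k | ∃ j, 1 ≤ j ∧ linearThenDoubling m j = k} :=
  fun k hk => ⟨k, hk.1, if_pos hk.2⟩

theorem one_add_mul_le_succ {ε : ℝ} (hε : ε ≤ 1) (hεm : ε * m ≤ 1) (j : ℕ) :
    (1 + ε) * (linearThenDoubling m j : ℝ) ≤ linearThenDoubling m (j + 1) := by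
  unfold linearThenDoubling
  rcases lt_trichotomy j m with hjm | rfl | hmj
  · rw [if_pos hjm.le, if_pos (Nat.succ_le_of_lt hjm)]
    have hj : (j : ℝ) ≤ m := by exact_mod_cast hjm.le
    have hεj : ε * j ≤ 1 := by
      rcases le_total 0 ε with h | h
      · nlinarith
      · nlinarith [(Nat.cast_nonneg j : (0 : ℝ) ≤ j)]
    push_cast
    linarith
  · rw [if_pos le_rfl, if_neg (by omega), Nat.add_sub_cancel_left, pow_one]
    push_cast
    nlinarith [(Nat.cast_nonneg j : (0 : ℝ) ≤ j)]
  · rw [if_neg hmj.not_ge, if_neg (by omega), Nat.sub_add_comm hmj.le, pow_succ]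
    have hpos : (0 : ℝ) ≤ m * 2 ^ (j - m) := by positivity
    push_cast
    nlinarith

end linearThenDoubling

/-- For every `0 < ε < 1` there is a lacunary sequence with ratio `1 + ε` whose distance
graph has chromatic number greater than `⌊ε⁻¹⌋`. -/
theorem chromatic_number_lower_bound
    (ε : ℝ) (hε : 0 < ε) (hε' : ε < 1) :
    ∃ n : ℕ → ℕ,
      (∀ j, 1 ≤ j → 0 < n j) ∧
      (∀ j, 1 ≤ j → (1 + ε) * (n j : ℝ) ≤ (n (j + 1) : ℝ)) ∧
      ((⌊ε⁻¹⌋₊ : ℕ∞) <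
        (distGraph {k : ℕ | ∃ j, 1 ≤ j ∧ n j = k}).chromaticNumber) := by
  set m := ⌊ε⁻¹⌋₊
  have hm : 1 ≤ m := (Nat.one_le_floor_iff _).mpr ((one_le_inv₀ hε).mpr hε'.le)
  have hεm : ε * m ≤ 1 := by
    calc ε * m ≤ ε * ε⁻¹ := by gcongr; exact Nat.floor_le (by positivity)
      _ = 1 := mul_inv_cancel₀ hε.ne'
  exact ⟨linearThenDoubling m, fun j => linearThenDoubling.pos hm,
    fun j _ => linearThenDoubling.one_add_mul_le_succ hε'.le hεm j,
    lt_chromaticNumber_distGraph linearThenDoubling.Icc_subset_range⟩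
end

section
/- There exists a universal constant c > 0 with the following property. Let 0 < ε < 1/4 and let (n_j)_{j≥1} be a sequence of positive integers satisfying n_{j+1} ≥ (1+ε)·n_j for all j ≥ 1. Suppose N is a positive integer and a_0, a_1, …, a_N are real numbers such that the trigonometric polynomial T(x) = a_0 + Σ_{j=1}^{N} a_j·cos(2π·n_j·x) satisfies T(x) ≥ 0 for all x ∈ ℝ and T(0) = 1. Then a_0 > c·ε·|log ε|⁻¹. -/
/-!
The Riesz product `R_S x = ∏_{j ∈ S} (1 - cos (2π n_j x))` is nonnegative, so
`∫₀¹ T R_S ≥ 0`. If the frequencies `n_j`, `j ∈ S`, grow at least by the factor `2/ε`, the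
Fourier coefficients of `R_S` are `1` at `0`, `-1/2` at `±n_j` for `j ∈ S`, and `0` at `±n_i`
for the other `i`; hence the integral equals `a₀ - ½ ∑_{j ∈ S} a_j`. Lacunarity with ratio
`1 + ε` yields this growth along each residue class modulo `m = ⌈2 |log ε| / ε⌉`, and summing
over the `m` classes, with `∑ a_j = T 0 - a₀ = 1 - a₀`, gives
`a₀ ≥ 1 / (2m + 1) > ε / (8 |log ε|)`.
-/

open Finset Real AddMonoidAlgebra

noncomputable section

namespace LacunaryTrigPoly

def expChar (x : ℝ) : Multiplicative ℤ →* ℂ where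
  toFun k := Complex.exp (2 * π * Complex.I * k.toAdd * x)
  map_one' := by simp
  map_mul' k l := by
    rw [toAdd_mul, Int.cast_add, ← Complex.exp_add]
    ring_nf

/-- `F : ℝ[ℤ]` stands for the trigonometric polynomial `x ↦ ∑ₖ F.coeff k * exp (2πikx)`. -/
def eval (x : ℝ) : ℝ[ℤ] →ₐ[ℝ] ℂ := lift ℝ ℂ ℤ (expChar x)

lemma eval_apply (x : ℝ) (F : ℝ[ℤ]) :
    eval x F = ∑ k ∈ F.coeff.support, F.coeff k * Complex.exp (2 * π * Complex.I * k * x) := by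
  rw [eval, lift_apply, Finsupp.sum]
  simp only [Complex.real_smul]
  rfl

lemma eval_single (x : ℝ) (k : ℤ) (c : ℝ) :
    eval x (single k c) = c * Complex.exp (2 * π * Complex.I * k * x) := by
  rw [eval, lift_single, Complex.real_smul]
  rfl

def cosPoly (m : ℤ) : ℝ[ℤ] := (1 / 2 : ℝ) • (single m 1 + single (-m) 1)

lemma eval_cosPoly (x : ℝ) (m : ℤ) : eval x (cosPoly m) = Real.cos (2 * π * m * x) := by
  rw [cosPoly, map_smul, map_add, eval_single, eval_single, Complex.ofReal_cos, Complex.cos,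
    Complex.real_smul]
  push_cast
  ring_nf

lemma coeff_mul_cosPoly (f : ℝ[ℤ]) (m q : ℤ) :
    (f * cosPoly m).coeff q = (f.coeff (q - m) + f.coeff (q + m)) / 2 := by
  rw [cosPoly, mul_smul_comm, coeff_smul_apply, mul_add, coeff_add, Finsupp.add_apply,
    coeff_mul_single_apply, coeff_mul_single_apply, neg_neg, smul_eq_mul, ← sub_eq_add_neg]
  ring

lemma integral_exp_two_pi_I_int_mul (k : ℤ) :
    ∫ x in (0 : ℝ)..1, Complex.exp (2 * π * Complex.I * k * x) = if k = 0 then 1 else 0 := by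
  split_ifs with hk
  · simp [hk]
  · have hc : 2 * π * Complex.I * k ≠ 0 := by simp [hk, Real.pi_ne_zero, Complex.I_ne_zero]
    rw [integral_exp_mul_complex hc]
    have : Complex.exp (2 * π * Complex.I * k) = 1 := by
      rw [← Complex.exp_int_mul_two_pi_mul_I k]
      ring_nf
    simp [this]

lemma integral_eval (F : ℝ[ℤ]) : ∫ x in (0 : ℝ)..1, eval x F = F.coeff 0 := by
  simp_rw [eval_apply]
  rw [intervalIntegral.integral_finsetSum fun k _ =>
    (by fun_prop : Continuous _).intervalIntegrable 0 1]
  simp_rw [intervalIntegral.integral_const_mul, integral_exp_two_pi_I_int_mul, mul_ite, mul_one,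
    mul_zero, Finset.sum_ite_eq']
  split_ifs with h
  · rfl
  · rw [Finsupp.notMem_support_iff.mp h, Complex.ofReal_zero]

lemma coeff_zero_nonneg_of_eval_eq {F : ℝ[ℤ]} {g : ℝ → ℝ} (hF : ∀ x, eval x F = g x)
    (hg : ∀ x, 0 ≤ g x) : 0 ≤ F.coeff 0 := by
  have h : (F.coeff 0 : ℂ) = (∫ x in (0 : ℝ)..1, g x : ℝ) := by
    rw [← integral_eval, ← intervalIntegral.integral_ofReal]
    simp_rw [hF]
  rw [Complex.ofReal_inj.mp h]
  exact intervalIntegral.integral_nonneg zero_le_one fun x _ => hg x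

lemma coeff_one (q : ℤ) : (1 : ℝ[ℤ]).coeff q = if q = 0 then 1 else 0 := by
  rw [one_def, coeff_single, Finsupp.single_apply]
  exact if_congr eq_comm rfl rfl

section RieszProduct

variable {ι : Type*}

def rieszProduct (m : ι → ℕ) (S : Finset ι) : ℝ[ℤ] := ∏ j ∈ S, (1 - cosPoly (m j))

lemma eval_rieszProduct (m : ι → ℕ) (S : Finset ι) (x : ℝ) :
    eval x (rieszProduct m S) = ((∏ j ∈ S, (1 - Real.cos (2 * π * m j * x)) : ℝ) : ℂ) := by
  rw [rieszProduct, map_prod, Complex.ofReal_prod]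
  refine Finset.prod_congr rfl fun j _ => ?_
  rw [map_sub, map_one, eval_cosPoly]
  push_cast
  rfl

lemma coeff_rieszProduct_insert [DecidableEq ι] (m : ι → ℕ) {s : Finset ι} {J : ι} (hJ : J ∉ s)
    (q : ℤ) :
    (rieszProduct m (insert J s)).coeff q = (rieszProduct m s).coeff q
      - ((rieszProduct m s).coeff (q - m J) + (rieszProduct m s).coeff (q + m J)) / 2 := by
  rw [rieszProduct, Finset.prod_insert hJ, mul_comm, ← rieszProduct, mul_sub, mul_one, coeff_sub,
    Finsupp.sub_apply, coeff_mul_cosPoly]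

lemma coeff_rieszProduct_neg (m : ι → ℕ) (S : Finset ι) (q : ℤ) :
    (rieszProduct m S).coeff (-q) = (rieszProduct m S).coeff q := by
  classical
  induction S using Finset.induction_on generalizing q with
  | empty => simp [rieszProduct, coeff_one]
  | insert J s hJ ih =>
    rw [coeff_rieszProduct_insert m hJ, coeff_rieszProduct_insert m hJ, ih,
      show -q - m J = -(q + m J) by ring, show -q + m J = -(q - m J) by ring, ih, ih, add_comm]

lemma coeff_rieszProduct_eq_zero_of_lt (m : ι → ℕ) (S : Finset ι) {q : ℤ}
    (hq : ∑ j ∈ S, (m j : ℤ) < |q|) : (rieszProduct m S).coeff q = 0 := by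
  classical
  induction S using Finset.induction_on generalizing q with
  | empty =>
    rw [rieszProduct, Finset.prod_empty, coeff_one, if_neg]
    rintro rfl
    simp at hq
  | insert J s hJ ih =>
    rw [Finset.sum_insert hJ] at hq
    have hsub := abs_sub_abs_le_abs_sub q (m J)
    have hadd := abs_sub_abs_le_abs_sub q (-m J)
    rw [abs_neg, sub_neg_eq_add, Nat.abs_cast] at hadd
    rw [Nat.abs_cast] at hsub
    rw [coeff_rieszProduct_insert m hJ, ih (by linarith), ih (by linarith), ih (by linarith)]
    norm_num

variable [LinearOrder ι]

def IsSuperIncreasing (m : ι → ℕ) (S : Finset ι) : Prop :=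
  ∀ J ∈ S, 2 * ∑ j ∈ S with j < J, m j < m J

lemma filter_insert_max_lt {s : Finset ι} {J : ι} (hJ : ∀ j ∈ s, j < J) :
    {j ∈ insert J s | j < J} = s := by
  rw [Finset.filter_insert, if_neg (lt_irrefl J), Finset.filter_true_of_mem hJ]

lemma filter_insert_max_lt_of_mem {s : Finset ι} {J J' : ι} (hJ : ∀ j ∈ s, j < J) (hJ' : J' ∈ s) :
    {j ∈ insert J s | j < J'} = {j ∈ s | j < J'} := by
  rw [Finset.filter_insert, if_neg (not_lt.mpr (hJ J' hJ').le)]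

lemma IsSuperIncreasing.of_insert_max {m : ι → ℕ} {s : Finset ι} {J : ι} (hJ : ∀ j ∈ s, j < J)
    (h : IsSuperIncreasing m (insert J s)) : IsSuperIncreasing m s := fun J' hJ' => by
  simpa only [filter_insert_max_lt_of_mem hJ hJ'] using h J' (Finset.mem_insert_of_mem hJ')

lemma IsSuperIncreasing.two_mul_sum_lt_of_insert_max {m : ι → ℕ} {s : Finset ι} {J : ι}
    (hJ : ∀ j ∈ s, j < J) (h : IsSuperIncreasing m (insert J s)) :
    2 * ∑ j ∈ s, (m j : ℤ) < m J := by
  have := h J (Finset.mem_insert_self J s)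
  rw [filter_insert_max_lt hJ] at this
  exact_mod_cast this

lemma coeff_zero_rieszProduct {m : ι → ℕ} {S : Finset ι} (hS : IsSuperIncreasing m S) :
    (rieszProduct m S).coeff 0 = 1 := by
  induction S using Finset.induction_on_max with
  | empty => simp [rieszProduct]
  | insert J s hJ ih =>
    have hlt := hS.two_mul_sum_lt_of_insert_max hJ
    have hsum : 0 ≤ ∑ j ∈ s, (m j : ℤ) := Finset.sum_nonneg fun j _ => Nat.cast_nonneg _
    rw [coeff_rieszProduct_insert m (fun h => lt_irrefl J (hJ J h)), ih (hS.of_insert_max hJ),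
      coeff_rieszProduct_eq_zero_of_lt m s (q := 0 - m J)
        (by rw [zero_sub, abs_neg, Nat.abs_cast]; linarith),
      coeff_rieszProduct_eq_zero_of_lt m s (q := 0 + m J)
        (by rw [zero_add, Nat.abs_cast]; linarith)]
    norm_num

lemma coeff_rieszProduct_of_mem {m : ι → ℕ} {S : Finset ι} (hS : IsSuperIncreasing m S) {J : ι}
    (hJS : J ∈ S) : (rieszProduct m S).coeff (m J) = -1 / 2 := by
  induction S using Finset.induction_on_max with
  | empty => simp at hJS
  | insert K s hK ih =>
    have hlt := hS.two_mul_sum_lt_of_insert_max hK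
    have hs := hS.of_insert_max hK
    have hsum : 0 ≤ ∑ j ∈ s, (m j : ℤ) := Finset.sum_nonneg fun j _ => Nat.cast_nonneg _
    have hzero {q : ℤ} (hq : ∑ j ∈ s, (m j : ℤ) < |q|) := coeff_rieszProduct_eq_zero_of_lt m s hq
    rw [coeff_rieszProduct_insert m (fun h => lt_irrefl K (hK K h))]
    rcases Finset.mem_insert.mp hJS with rfl | hJs
    · rw [sub_self, coeff_zero_rieszProduct hs, hzero (by rw [Nat.abs_cast]; linarith),
        hzero (by rw [abs_of_nonneg (by positivity)]; linarith)]
      norm_num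
    · have hJ : (m J : ℤ) ≤ ∑ j ∈ s, (m j : ℤ) :=
        Finset.single_le_sum (fun j _ => Nat.cast_nonneg (m j)) hJs
      rw [ih hs hJs, hzero (by rw [abs_of_nonpos (by linarith)]; linarith),
        hzero (by rw [abs_of_nonneg (by positivity)]; linarith)]
      norm_num

lemma coeff_rieszProduct_eq_zero {m : ι → ℕ} {S : Finset ι} {q : ℤ} (hq : 0 < q)
    (hsep : ∀ J ∈ S, ∑ j ∈ S with j < J, (m j : ℤ) < |q - m J|) :
    (rieszProduct m S).coeff q = 0 := by
  induction S using Finset.induction_on_max with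
  | empty => simp [rieszProduct, coeff_one, hq.ne']
  | insert J s hJ ih =>
    have hJs := hsep J (Finset.mem_insert_self J s)
    rw [filter_insert_max_lt hJ] at hJs
    have hmJ : (0 : ℤ) ≤ m J := Nat.cast_nonneg _
    have hle : |q - m J| ≤ q + m J := abs_sub_le_iff.mpr ⟨by linarith, by linarith⟩
    rw [coeff_rieszProduct_insert m (fun h => lt_irrefl J (hJ J h)),
      ih fun J' hJ' => by
        simpa only [filter_insert_max_lt_of_mem hJ hJ'] using hsep J' (mem_insert_of_mem hJ'),
      coeff_rieszProduct_eq_zero_of_lt m s hJs,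
      coeff_rieszProduct_eq_zero_of_lt m s (q := q + m J)
        (by rw [abs_of_nonneg (by positivity)]; linarith)]
    norm_num

end RieszProduct

section CosineSum

variable {ι : Type*}

def cosSum (a₀ : ℝ) (a : ι → ℝ) (n : ι → ℕ) (I : Finset ι) : ℝ[ℤ] :=
  single 0 a₀ + ∑ j ∈ I, a j • cosPoly (n j)

lemma eval_cosSum (a₀ : ℝ) (a : ι → ℝ) (n : ι → ℕ) (I : Finset ι) (x : ℝ) :
    eval x (cosSum a₀ a n I) = ((a₀ + ∑ j ∈ I, a j * Real.cos (2 * π * n j * x) : ℝ) : ℂ) := by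
  simp only [cosSum, map_add, map_sum, map_smul, eval_single, eval_cosPoly, Int.cast_zero,
    mul_zero, zero_mul, Complex.exp_zero, mul_one, Complex.real_smul, Int.cast_natCast]
  push_cast
  rfl

lemma coeff_zero_mul_cosSum (R : ℝ[ℤ]) (a₀ : ℝ) (a : ι → ℝ) (n : ι → ℕ) (I : Finset ι) :
    (R * cosSum a₀ a n I).coeff 0
      = a₀ * R.coeff 0 + ∑ j ∈ I, a j * ((R.coeff (-n j) + R.coeff (n j)) / 2) := by
  rw [cosSum, mul_add, coeff_add, Finsupp.add_apply, coeff_mul_single_apply, neg_zero, add_zero,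
    mul_comm, Finset.mul_sum, coeff_sum, Finset.sum_apply']
  congr 1
  refine Finset.sum_congr rfl fun j _ => ?_
  rw [mul_smul_comm, coeff_smul_apply, coeff_mul_cosPoly, zero_sub, zero_add, smul_eq_mul]

theorem sum_div_two_le_of_nonneg [LinearOrder ι] {a₀ : ℝ} {a : ι → ℝ} {n : ι → ℕ}
    {I S : Finset ι} (hT : ∀ x, 0 ≤ a₀ + ∑ j ∈ I, a j * Real.cos (2 * π * n j * x))
    (hSI : S ⊆ I) (hS : IsSuperIncreasing n S) (hn : ∀ i ∈ I, 0 < n i)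
    (hsep : ∀ i ∈ I, i ∉ S → ∀ J ∈ S, ∑ j ∈ S with j < J, (n j : ℤ) < |(n i : ℤ) - n J|) :
    (∑ j ∈ S, a j) / 2 ≤ a₀ := by
  set R := rieszProduct n S
  have hcoeff : ∀ j ∈ I, a j * ((R.coeff (-n j) + R.coeff (n j)) / 2)
      = if j ∈ S then -(a j / 2) else 0 := by
    intro j hj
    rw [coeff_rieszProduct_neg]
    split_ifs with hjS
    · rw [coeff_rieszProduct_of_mem hS hjS]; ring
    · rw [coeff_rieszProduct_eq_zero (by exact_mod_cast hn j hj) (hsep j hj hjS)]; ring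
  have hconst : (R * cosSum a₀ a n I).coeff 0 = a₀ - (∑ j ∈ S, a j) / 2 := by
    rw [coeff_zero_mul_cosSum, coeff_zero_rieszProduct hS, Finset.sum_congr rfl hcoeff,
      Finset.sum_ite_mem, Finset.inter_eq_right.mpr hSI, Finset.sum_neg_distrib, Finset.sum_div]
    ring
  have hnonneg := coeff_zero_nonneg_of_eval_eq (F := R * cosSum a₀ a n I)
    (fun x => by rw [map_mul, eval_rieszProduct, eval_cosSum, ← Complex.ofReal_mul])
    fun x => mul_nonneg (Finset.prod_nonneg fun j _ => sub_nonneg.mpr (Real.cos_le_one _)) (hT x)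
  linarith

end CosineSum

lemma sub_one_mul_sum_le {ι : Type*} [LinearOrder ι] {x : ι → ℝ} {r y : ℝ} {S : Finset ι}
    (hx : ∀ i ∈ S, 0 ≤ x i) (hS : ∀ i ∈ S, ∀ j ∈ S, i < j → r * x i ≤ x j) (hy : 0 ≤ y)
    (hxy : ∀ i ∈ S, r * x i ≤ y) : (r - 1) * ∑ i ∈ S, x i ≤ y := by
  induction S using Finset.induction_on_max generalizing y with
  | empty => simpa using hy
  | insert K s hK ih =>
    have hs : (r - 1) * ∑ i ∈ s, x i ≤ x K :=
      ih (fun i hi => hx i (mem_insert_of_mem hi))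
        (fun i hi j hj => hS i (mem_insert_of_mem hi) j (mem_insert_of_mem hj))
        (hx K (mem_insert_self K s))
        fun i hi => hS i (mem_insert_of_mem hi) K (mem_insert_self K s) (hK i hi)
    rw [sum_insert fun h => lt_irrefl K (hK K h)]
    linarith [hxy K (mem_insert_self K s)]

section Lacunary

variable {ε : ℝ} {n : ℕ → ℕ}

lemma one_add_pow_mul_le (hε : 0 ≤ ε) (hlac : ∀ j, 1 ≤ j → (1 + ε) * (n j : ℝ) ≤ n (j + 1))
    {i j : ℕ} (hi : 1 ≤ i) (hij : i ≤ j) : (1 + ε) ^ (j - i) * (n i : ℝ) ≤ n j := by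
  induction j, hij using Nat.le_induction with
  | base => simp
  | succ j hij ih =>
    calc (1 + ε) ^ (j + 1 - i) * (n i : ℝ) = (1 + ε) * ((1 + ε) ^ (j - i) * n i) := by
          rw [Nat.sub_add_comm hij, pow_succ]; ring
      _ ≤ (1 + ε) * n j := mul_le_mul_of_nonneg_left ih (by linarith)
      _ ≤ n (j + 1) := hlac j (hi.trans hij)

lemma one_add_mul_le_of_lt (hε : 0 ≤ ε) (hlac : ∀ j, 1 ≤ j → (1 + ε) * (n j : ℝ) ≤ n (j + 1))
    {i j : ℕ} (hi : 1 ≤ i) (hij : i < j) : (1 + ε) * (n i : ℝ) ≤ n j :=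
  (mul_le_mul_of_nonneg_right (le_self_pow₀ (by linarith) (by omega)) (Nat.cast_nonneg _)).trans
    (one_add_pow_mul_le hε hlac hi hij.le)

lemma two_div_mul_le_of_mod_eq (hε : 0 ≤ ε)
    (hlac : ∀ j, 1 ≤ j → (1 + ε) * (n j : ℝ) ≤ n (j + 1)) {m : ℕ} (hm : 2 / ε ≤ (1 + ε) ^ m)
    {i j : ℕ} (hi : 1 ≤ i) (hij : i < j) (hmod : i % m = j % m) : 2 / ε * n i ≤ n j := by
  have hmji : m ≤ j - i := Nat.le_of_dvd (by omega) ((Nat.modEq_iff_dvd' hij.le).mp hmod)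
  calc 2 / ε * (n i : ℝ) ≤ (1 + ε) ^ (j - i) * n i := by
        gcongr
        exact hm.trans (pow_le_pow_right₀ (by linarith) hmji)
    _ ≤ n j := one_add_pow_mul_le hε hlac hi hij.le

theorem sum_div_two_le_of_two_div_mul_le (hε0 : 0 < ε) (hε : ε < 1 / 4)
    (hpos : ∀ j, 1 ≤ j → 0 < n j) (hlac : ∀ j, 1 ≤ j → (1 + ε) * (n j : ℝ) ≤ n (j + 1))
    {N : ℕ} {a : ℕ → ℝ} (hT : ∀ x, 0 ≤ a 0 + ∑ j ∈ Icc 1 N, a j * Real.cos (2 * π * n j * x))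
    {S : Finset ℕ} (hSN : S ⊆ Icc 1 N) (hS : ∀ i ∈ S, ∀ j ∈ S, i < j → 2 / ε * n i ≤ n j) :
    (∑ j ∈ S, a j) / 2 ≤ a 0 := by
  have hpart : ∀ J ∈ S, (2 - ε) * ∑ j ∈ S with j < J, (n j : ℝ) ≤ ε * n J := by
    intro J hJ
    have h := sub_one_mul_sum_le (x := fun j => (n j : ℝ)) (S := {j ∈ S | j < J})
      (fun _ _ => Nat.cast_nonneg _)
      (fun i hi j hj => hS i (mem_filter.mp hi).1 j (mem_filter.mp hj).1) (Nat.cast_nonneg (n J))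
      fun i hi => hS i (mem_filter.mp hi).1 J hJ (mem_filter.mp hi).2
    rw [div_sub_one hε0.ne', div_mul_eq_mul_div, div_le_iff₀ hε0] at h
    linarith
  have hσ : ∀ J ∈ S, 0 ≤ ∑ j ∈ S with j < J, (n j : ℝ) := fun J _ =>
    sum_nonneg fun _ _ => Nat.cast_nonneg _
  have hnpos : ∀ J ∈ S, (0 : ℝ) < n J := fun J hJ => by
    exact_mod_cast hpos J (mem_Icc.mp (hSN hJ)).1
  refine sum_div_two_le_of_nonneg hT hSN (fun J hJ => ?_) (fun i hi => hpos i (mem_Icc.mp hi).1) ?_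
  · have : 2 * ∑ j ∈ S with j < J, (n j : ℝ) < n J := by
      nlinarith [hpart J hJ, hσ J hJ, hnpos J hJ]
    exact_mod_cast this
  · intro i hi hiS J hJ
    have hi1 := (mem_Icc.mp hi).1
    have hJ1 := (mem_Icc.mp (hSN hJ)).1
    suffices ∑ j ∈ S with j < J, (n j : ℝ) < |(n i : ℝ) - n J| by exact_mod_cast this
    rcases lt_or_gt_of_ne (show i ≠ J by rintro rfl; exact hiS hJ) with hiJ | hJi
    · have := one_add_mul_le_of_lt hε0.le hlac hi1 hiJ
      rw [abs_sub_comm, abs_of_pos (by nlinarith [hnpos J hJ])]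
      nlinarith [hpart J hJ, hσ J hJ, hnpos J hJ]
    · have := one_add_mul_le_of_lt hε0.le hlac hJ1 hJi
      rw [abs_of_pos (by nlinarith [hnpos J hJ])]
      nlinarith [hpart J hJ, hσ J hJ, hnpos J hJ]

end Lacunary

section Numerics

variable {ε : ℝ}

lemma two_mul_log_two_lt_abs_log (hε0 : 0 < ε) (hε : ε < 1 / 4) : 2 * log 2 < |log ε| := by
  have h : log ε < log (1 / 4) := log_lt_log hε0 hε
  rw [one_div, log_inv, show (4 : ℝ) = 2 ^ 2 by norm_num, log_pow, Nat.cast_ofNat] at h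
  rw [abs_of_neg (by linarith [log_pos (one_lt_two : (1 : ℝ) < 2)])]
  linarith

lemma two_div_le_one_add_pow_ceil (hε0 : 0 < ε) (hε : ε < 1 / 4) :
    2 / ε ≤ (1 + ε) ^ ⌈2 * |log ε| / ε⌉₊ := by
  have hL := two_mul_log_two_lt_abs_log hε0 hε
  have hlog1 : 3 / 4 * ε ≤ log (1 + ε) := by
    refine le_trans ?_ (le_log_one_add_of_nonneg hε0.le)
    rw [le_div_iff₀ (by linarith)]
    nlinarith
  have hlog2 : log (2 / ε) ≤ 3 / 2 * |log ε| := by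
    rw [log_div two_ne_zero hε0.ne']
    linarith [neg_le_abs (log ε)]
  rw [← log_le_log_iff (by positivity) (by positivity), log_pow]
  calc log (2 / ε) ≤ 2 * |log ε| / ε * (3 / 4 * ε) := by
        field_simp
        linarith
    _ ≤ ⌈2 * |log ε| / ε⌉₊ * log (1 + ε) :=
        mul_le_mul (Nat.le_ceil _) hlog1 (by positivity) (Nat.cast_nonneg _)

lemma mul_two_mul_ceil_add_one_lt (hε0 : 0 < ε) (hε : ε < 1 / 4) :
    ε * (2 * ⌈2 * |log ε| / ε⌉₊ + 1) < 8 * |log ε| := by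
  have hL := two_mul_log_two_lt_abs_log hε0 hε
  have hlog2 := log_two_gt_d9
  have hceil : (⌈2 * |log ε| / ε⌉₊ : ℝ) < 2 * |log ε| / ε + 1 :=
    Nat.ceil_lt_add_one (by positivity)
  have : ε * (2 * |log ε| / ε) = 2 * |log ε| := by field_simp
  nlinarith

lemma one_div_eight_mul_mul_inv_abs_log_lt (hε0 : 0 < ε) (hε : ε < 1 / 4) {a₀ : ℝ}
    (ha₀ : 1 ≤ (2 * ⌈2 * |log ε| / ε⌉₊ + 1) * a₀) : 1 / 8 * ε * |log ε|⁻¹ < a₀ := by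
  have hL : 0 < |log ε| := by linarith [two_mul_log_two_lt_abs_log hε0 hε, log_pos one_lt_two]
  rw [show 1 / 8 * ε * |log ε|⁻¹ = ε / (8 * |log ε|) by ring, div_lt_iff₀ (by positivity)]
  calc ε ≤ ε * ((2 * ⌈2 * |log ε| / ε⌉₊ + 1) * a₀) := le_mul_of_one_le_right hε0.le ha₀
    _ = ε * (2 * ⌈2 * |log ε| / ε⌉₊ + 1) * a₀ := by ring
    _ < 8 * |log ε| * a₀ := mul_lt_mul_of_pos_right (mul_two_mul_ceil_add_one_lt hε0 hε)
        (pos_of_mul_pos_right (one_pos.trans_le ha₀) (by positivity))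
    _ = a₀ * (8 * |log ε|) := by ring

end Numerics

end LacunaryTrigPoly

end

open LacunaryTrigPoly

/-- There is a universal constant `c > 0` such that whenever `(n j)` is lacunary with
ratio `1 + ε` (`0 < ε < 1/4`) and `T x = a 0 + ∑_{j=1}^N a j * cos (2π n j x)` is a
nonnegative trigonometric polynomial with `T 0 = 1`, one has
`∫₀¹ T = a 0 > c * ε * |log ε|⁻¹`. -/
theorem nonneg_trig_poly_mean_lower_bound :
    ∃ c : ℝ, 0 < c ∧
      ∀ ε : ℝ, 0 < ε → ε < 1 / 4 →
        ∀ n : ℕ → ℕ, (∀ j, 1 ≤ j → 0 < n j) →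
          (∀ j, 1 ≤ j → (1 + ε) * (n j : ℝ) ≤ (n (j + 1) : ℝ)) →
          ∀ N : ℕ, 1 ≤ N → ∀ a : ℕ → ℝ,
            (∀ x : ℝ,
              0 ≤ a 0 + ∑ j ∈ Finset.Icc 1 N, a j * Real.cos (2 * Real.pi * n j * x)) →
            (a 0 + ∑ j ∈ Finset.Icc 1 N, a j * Real.cos (2 * Real.pi * n j * 0) = 1) →
            c * ε * |Real.log ε|⁻¹ < a 0 := by
  refine ⟨1 / 8, by norm_num, fun ε hε0 hε n hpos hlac N _ a hT hT0 => ?_⟩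
  set m := ⌈2 * |log ε| / ε⌉₊
  have hpow : 2 / ε ≤ (1 + ε) ^ m := two_div_le_one_add_pow_ceil hε0 hε
  have hm : 0 < m := Nat.pos_of_ne_zero fun h => by
    rw [h, pow_zero, div_le_one hε0] at hpow
    linarith
  have hclass : ∀ r ∈ range m, (∑ j ∈ Icc 1 N with j % m = r, a j) / 2 ≤ a 0 :=
    fun r _ => sum_div_two_le_of_two_div_mul_le hε0 hε hpos hlac hT (filter_subset _ _)
      fun i hi j hj hij => two_div_mul_le_of_mod_eq hε0.le hlac hpow
        (mem_Icc.mp (mem_filter.mp hi).1).1 hij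
        ((mem_filter.mp hi).2.trans (mem_filter.mp hj).2.symm)
  have hsum : (∑ j ∈ Icc 1 N, a j) / 2 ≤ m * a 0 := by
    rw [← sum_fiberwise_of_maps_to (g := (· % m)) fun j _ => mem_range.mpr (Nat.mod_lt j hm),
      sum_div]
    simpa using sum_le_sum hclass
  have hT0' : ∑ j ∈ Icc 1 N, a j = 1 - a 0 := by
    simp only [mul_zero, Real.cos_zero, mul_one] at hT0
    linarith
  exact one_div_eight_mul_mul_inv_abs_log_lt hε0 hε (by linarith)
end
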